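/- arXiv:2407.01401 — 3 statements merged into one kernel-verified Lean document; each statement's English description precedes it below -/
import Mathlib

section
/- Let V_1, …, V_n be mutually independent finite-valued random variables and let Z be any finite-valued random variable on the same probability space. Then for every subset D ⊆ {1,…,n}, the conditional mutual information satisfies I(V_D; Z | V_{D^c}) ≥ Σ_{i∈D} I(V_i; (Z, V_{{1,…,i−1}})). (This is the paper's Lemma 2: the right-hand side is the sum of the bit-channel capacities C_i = I(V_i; (Z, V_{{1,…,i−1}})) over i ∈ D.) -/
open scoped Classical

noncomputable section

/-- `p` is a probability mass function on the finite sample space `Ω`. -/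
def IsPMF {Ω : Type} [Fintype Ω] (p : Ω → ℝ) : Prop :=
  (∀ ω, 0 ≤ p ω) ∧ ∑ ω, p ω = 1

/-- `P(X = x)`: the probability of the event `{X = x}` under the pmf `p`. -/
def prob {Ω : Type} [Fintype Ω] (p : Ω → ℝ) {α : Type} (X : Ω → α) (x : α) : ℝ :=
  ∑ ω, if X ω = x then p ω else 0

/-- Shannon entropy of `X` in bits (logarithm base 2). -/
def entropy {Ω : Type} [Fintype Ω] (p : Ω → ℝ) {α : Type} [Fintype α] (X : Ω → α) : ℝ :=
  -∑ x, prob p X x * Real.logb 2 (prob p X x)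

/-- Mutual information `I(X;Y) = H(X) + H(Y) - H((X,Y))` in bits. -/
def mutInfo {Ω : Type} [Fintype Ω] (p : Ω → ℝ) {α β : Type} [Fintype α] [Fintype β]
    (X : Ω → α) (Y : Ω → β) : ℝ :=
  entropy p X + entropy p Y - entropy p fun ω => (X ω, Y ω)

/-- Conditional mutual information
`I(X;Y∣W) = H((X,W)) + H((Y,W)) - H((X,Y,W)) - H(W)` in bits. -/
def condMutInfo {Ω : Type} [Fintype Ω] (p : Ω → ℝ) {α β γ : Type}
    [Fintype α] [Fintype β] [Fintype γ] (X : Ω → α) (Y : Ω → β) (W : Ω → γ) : ℝ :=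
  entropy p (fun ω => (X ω, W ω)) + entropy p (fun ω => (Y ω, W ω))
    - entropy p (fun ω => (X ω, Y ω, W ω)) - entropy p W

/-- The finite-valued random variables `V 1, …, V n` are mutually independent under `p`:
their joint pmf factorizes as the product of the marginal pmfs. -/
def MutIndep {Ω : Type} [Fintype Ω] (p : Ω → ℝ) {n : ℕ} {α : Fin n → Type}
    (V : ∀ i, Ω → α i) : Prop :=
  ∀ x : ∀ i, α i, prob p (fun ω i => V i ω) x = ∏ i, prob p (V i) (x i)

set_option linter.unusedSectionVars false
set_option maxHeartbeats 1000000

section Lemmas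

variable {Ω : Type} [Fintype Ω] {p : Ω → ℝ}

lemma prob_nonneg (hp : ∀ ω, 0 ≤ p ω) {α : Type} (X : Ω → α) (x : α) :
    0 ≤ prob p X x := by
  apply Finset.sum_nonneg; intro ω _; split <;> simp [hp ω]

lemma sum_prob {α : Type} [Fintype α] (X : Ω → α) :
    ∑ x, prob p X x = ∑ ω, p ω := by
  unfold prob
  rw [Finset.sum_comm]
  refine Finset.sum_congr rfl fun ω _ => ?_
  simp

lemma prob_comp_of_not_range {α β : Type} (f : α → β) (X : Ω → α) {y : β}
    (hy : ∀ x, f x ≠ y) : prob p (fun ω => f (X ω)) y = 0 := by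
  unfold prob
  refine Finset.sum_eq_zero fun ω _ => by simp [hy (X ω)]

lemma prob_comp_inj {α β : Type} {f : α → β} (hf : Function.Injective f) (X : Ω → α) (x : α) :
    prob p (fun ω => f (X ω)) (f x) = prob p X x := by
  unfold prob
  refine Finset.sum_congr rfl fun ω _ => ?_
  simp [hf.eq_iff]

/-- Entropy is invariant under composing with an injective map. -/
lemma entropy_comp_inj {α β : Type} [Fintype α] [Fintype β] {f : α → β}
    (hf : Function.Injective f) (X : Ω → α) :
    entropy p (fun ω => f (X ω)) = entropy p X := by
  unfold entropy
  congr 1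
  rw [← Finset.sum_subset (Finset.subset_univ (Finset.image f Finset.univ))]
  · rw [Finset.sum_image (fun a _ b _ h => hf h)]
    refine Finset.sum_congr rfl fun x _ => ?_
    rw [prob_comp_inj hf]
  · intro y _ hy
    have h0 : prob p (fun ω => f (X ω)) y = 0 := by
      apply prob_comp_of_not_range
      intro x hx
      exact hy (Finset.mem_image.2 ⟨x, Finset.mem_univ x, hx⟩)
    simp [h0]

/-- Entropy of a random variable with subsingleton codomain is 0. -/
lemma entropy_subsingleton {α : Type} [Fintype α] [Subsingleton α]
    (hp : IsPMF p) (X : Ω → α) : entropy p X = 0 := by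
  unfold entropy
  have : ∀ x : α, prob p X x = 1 := by
    intro x
    unfold prob
    rw [← hp.2]
    refine Finset.sum_congr rfl fun ω _ => by simp [Subsingleton.elim (X ω) x]
  simp [this]

variable {α β γ : Type} [Fintype α] [Fintype β] [Fintype γ]

lemma marg_XW (X : Ω → α) (Y : Ω → β) (W : Ω → γ) (x : α) (w : γ) :
    prob p (fun ω => (X ω, W ω)) (x, w)
      = ∑ y, prob p (fun ω => (X ω, Y ω, W ω)) (x, y, w) := by
  unfold prob
  beta_reduce
  rw [Finset.sum_comm]
  refine Finset.sum_congr rfl fun ω _ => ?_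
  simp only [Prod.mk.injEq]
  by_cases h : X ω = x ∧ W ω = w
  · simp [h.1, h.2]
  · rw [if_neg (by tauto)]
    exact (Finset.sum_eq_zero fun y _ => if_neg (by tauto)).symm

lemma marg_YW (X : Ω → α) (Y : Ω → β) (W : Ω → γ) (y : β) (w : γ) :
    prob p (fun ω => (Y ω, W ω)) (y, w)
      = ∑ x, prob p (fun ω => (X ω, Y ω, W ω)) (x, y, w) := by
  unfold prob
  beta_reduce
  rw [Finset.sum_comm]
  refine Finset.sum_congr rfl fun ω _ => ?_
  simp only [Prod.mk.injEq]
  by_cases h : Y ω = y ∧ W ω = w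
  · simp [h.1, h.2]
  · rw [if_neg (by tauto)]
    exact (Finset.sum_eq_zero fun x _ => if_neg (by tauto)).symm

lemma marg_fst (X : Ω → α) (W : Ω → γ) (w : γ) :
    prob p W w = ∑ x, prob p (fun ω => (X ω, W ω)) (x, w) := by
  unfold prob
  beta_reduce
  rw [Finset.sum_comm]
  refine Finset.sum_congr rfl fun ω _ => ?_
  simp only [Prod.mk.injEq]
  by_cases h : W ω = w
  · simp [h]
  · rw [if_neg h]
    exact (Finset.sum_eq_zero fun x _ => if_neg (by tauto)).symm

lemma marg_W (X : Ω → α) (Y : Ω → β) (W : Ω → γ) (w : γ) :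
    prob p W w = ∑ x, ∑ y, prob p (fun ω => (X ω, Y ω, W ω)) (x, y, w) := by
  rw [marg_fst X W w]
  exact Finset.sum_congr rfl fun x _ => marg_XW X Y W x w

lemma sum_rot (f : α → β → γ → ℝ) :
    ∑ x, ∑ y, ∑ w, f x y w = ∑ w, ∑ x, ∑ y, f x y w :=
  (Finset.sum_congr rfl fun _ _ => Finset.sum_comm).trans Finset.sum_comm

lemma sum_rot2 (f : α → β → γ → ℝ) :
    ∑ x, ∑ y, ∑ w, f x y w = ∑ y, ∑ w, ∑ x, f x y w :=
  Finset.sum_comm.trans (Finset.sum_congr rfl fun _ _ => Finset.sum_comm)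

/-- Abstract core: submodularity-type inequality for a nonneg triple array. -/
lemma cmi_core (q : α → β → γ → ℝ) (hq0 : ∀ x y w, 0 ≤ q x y w) :
    (∑ x, ∑ y, ∑ w, q x y w * Real.logb 2 (∑ y', q x y' w))
  + (∑ x, ∑ y, ∑ w, q x y w * Real.logb 2 (∑ x', q x' y w))
  ≤ (∑ x, ∑ y, ∑ w, q x y w * Real.logb 2 (q x y w))
  + (∑ x, ∑ y, ∑ w, q x y w * Real.logb 2 (∑ x', ∑ y', q x' y' w)) := by
  set s : α → γ → ℝ := fun x w => ∑ y, q x y w with hs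
  set t : β → γ → ℝ := fun y w => ∑ x, q x y w with ht
  set r : γ → ℝ := fun w => ∑ x, ∑ y, q x y w with hr
  have hlog2 : (0:ℝ) < Real.log 2 := Real.log_pos (by norm_num)
  have hs0 : ∀ x w, 0 ≤ s x w := fun x w => Finset.sum_nonneg fun y _ => hq0 x y w
  have ht0 : ∀ y w, 0 ≤ t y w := fun y w => Finset.sum_nonneg fun x _ => hq0 x y w
  have hr0 : ∀ w, 0 ≤ r w := fun w =>
    Finset.sum_nonneg fun x _ => Finset.sum_nonneg fun y _ => hq0 x y w
  have hqs : ∀ x y w, q x y w ≤ s x w := fun x y w =>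
    Finset.single_le_sum (fun y' _ => hq0 x y' w) (Finset.mem_univ y)
  have hqt : ∀ x y w, q x y w ≤ t y w := fun x y w =>
    Finset.single_le_sum (fun x' _ => hq0 x' y w) (Finset.mem_univ x)
  have hsr : ∀ x w, s x w ≤ r w := fun x w =>
    Finset.single_le_sum (fun x' _ => hs0 x' w) (Finset.mem_univ x)
  have htr : ∀ w, ∑ y, t y w = r w := fun w => Finset.sum_comm
  rw [← sub_nonneg]
  have merge : (∑ x, ∑ y, ∑ w, q x y w * Real.logb 2 (q x y w))
      + (∑ x, ∑ y, ∑ w, q x y w * Real.logb 2 (r w))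
      - ((∑ x, ∑ y, ∑ w, q x y w * Real.logb 2 (s x w))
      + (∑ x, ∑ y, ∑ w, q x y w * Real.logb 2 (t y w)))
      = ∑ x, ∑ y, ∑ w, q x y w * (Real.logb 2 (q x y w) + Real.logb 2 (r w)
          - Real.logb 2 (s x w) - Real.logb 2 (t y w)) := by
    simp only [← Finset.sum_add_distrib, ← Finset.sum_sub_distrib]
    exact Finset.sum_congr rfl fun x _ => Finset.sum_congr rfl fun y _ =>
      Finset.sum_congr rfl fun w _ => by ring
  rw [merge]
  -- lower bound pointwise
  have pointwise : ∀ x y w,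
      (if 0 < q x y w then (q x y w - s x w * t y w / r w) / Real.log 2 else 0)
      ≤ q x y w * (Real.logb 2 (q x y w) + Real.logb 2 (r w)
          - Real.logb 2 (s x w) - Real.logb 2 (t y w)) := by
    intro x y w
    by_cases h : 0 < q x y w
    · rw [if_pos h]
      have hs' : 0 < s x w := lt_of_lt_of_le h (hqs x y w)
      have ht' : 0 < t y w := lt_of_lt_of_le h (hqt x y w)
      have hr' : 0 < r w := lt_of_lt_of_le hs' (hsr x w)
      have hz : 0 < s x w * t y w / (q x y w * r w) := by positivity
      have hlog := Real.log_le_sub_one_of_pos hz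
      rw [Real.log_div (by positivity) (by positivity),
        Real.log_mul (ne_of_gt hs') (ne_of_gt ht'),
        Real.log_mul (ne_of_gt h) (ne_of_gt hr')] at hlog
      have key : q x y w - s x w * t y w / r w
          ≤ q x y w * (Real.log (q x y w) + Real.log (r w)
            - Real.log (s x w) - Real.log (t y w)) := by
        have h2 : 1 - s x w * t y w / (q x y w * r w)
            ≤ Real.log (q x y w) + Real.log (r w)
              - Real.log (s x w) - Real.log (t y w) := by linarith
        have h3 := mul_le_mul_of_nonneg_left h2 (le_of_lt h)
        calc q x y w - s x w * t y w / r w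
            = q x y w * (1 - s x w * t y w / (q x y w * r w)) := by
              field_simp
            _ ≤ _ := h3
      rw [Real.logb, Real.logb, Real.logb, Real.logb]
      rw [show q x y w * (Real.log (q x y w) / Real.log 2 + Real.log (r w) / Real.log 2
            - Real.log (s x w) / Real.log 2 - Real.log (t y w) / Real.log 2)
          = (q x y w * (Real.log (q x y w) + Real.log (r w)
            - Real.log (s x w) - Real.log (t y w))) / Real.log 2 from by ring]
      exact div_le_div_of_nonneg_right key hlog2.le
    · rw [if_neg h]
      have hq' : q x y w = 0 := le_antisymm (not_lt.1 h) (hq0 x y w)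
      rw [hq']; simp
  refine le_trans ?_ (Finset.sum_le_sum fun x _ => Finset.sum_le_sum fun y _ =>
    Finset.sum_le_sum fun w _ => pointwise x y w)
  have expand : (∑ x, ∑ y, ∑ w,
      (if 0 < q x y w then (q x y w - s x w * t y w / r w) / Real.log 2 else 0))
      = ((∑ x, ∑ y, ∑ w, (if 0 < q x y w then q x y w else 0))
        - (∑ x, ∑ y, ∑ w, (if 0 < q x y w then s x w * t y w / r w else 0))) / Real.log 2 := by
    calc (∑ x, ∑ y, ∑ w,
          (if 0 < q x y w then (q x y w - s x w * t y w / r w) / Real.log 2 else 0))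
        = ∑ x, ∑ y, ∑ w, (((if 0 < q x y w then q x y w else 0)
            - (if 0 < q x y w then s x w * t y w / r w else 0)) / Real.log 2) := by
          refine Finset.sum_congr rfl fun x _ => Finset.sum_congr rfl fun y _ =>
            Finset.sum_congr rfl fun w _ => ?_
          by_cases h : 0 < q x y w <;> simp [h]
      _ = (∑ x, ∑ y, ∑ w, ((if 0 < q x y w then q x y w else 0)
            - (if 0 < q x y w then s x w * t y w / r w else 0))) / Real.log 2 := by
          simp only [← Finset.sum_div]
      _ = _ := by simp only [Finset.sum_sub_distrib]
  rw [expand]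
  apply div_nonneg _ (le_of_lt hlog2)
  rw [sub_nonneg]
  have eA : (∑ x, ∑ y, ∑ w, (if 0 < q x y w then q x y w else 0))
      = ∑ x, ∑ y, ∑ w, q x y w := by
    refine Finset.sum_congr rfl fun x _ => Finset.sum_congr rfl fun y _ =>
      Finset.sum_congr rfl fun w _ => ?_
    by_cases h : 0 < q x y w
    · rw [if_pos h]
    · rw [if_neg h, le_antisymm (not_lt.1 h) (hq0 x y w)]
  have hB : (∑ x, ∑ y, ∑ w, (if 0 < q x y w then s x w * t y w / r w else 0))
      ≤ ∑ x, ∑ y, ∑ w, (if 0 < r w then s x w * t y w / r w else 0) := by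
    refine Finset.sum_le_sum fun x _ => Finset.sum_le_sum fun y _ =>
      Finset.sum_le_sum fun w _ => ?_
    by_cases h : 0 < q x y w
    · rw [if_pos h, if_pos (lt_of_lt_of_le h ((hqs x y w).trans (hsr x w)))]
    · rw [if_neg h]
      by_cases h' : 0 < r w
      · rw [if_pos h']
        have := hs0 x w; have := ht0 y w
        positivity
      · rw [if_neg h']
  have hB' : (∑ x, ∑ y, ∑ w, (if 0 < r w then s x w * t y w / r w else 0))
      = ∑ w, (if 0 < r w then r w else 0) := by
    rw [sum_rot]
    refine Finset.sum_congr rfl fun w _ => ?_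
    by_cases h : 0 < r w
    · simp only [if_pos h]
      have e1 : ∀ x, (∑ y, s x w * t y w / r w) = s x w * r w / r w := by
        intro x
        rw [← Finset.sum_div, ← Finset.mul_sum, htr w]
      rw [Finset.sum_congr rfl fun x _ => e1 x, ← Finset.sum_div, ← Finset.sum_mul]
      rw [show (∑ x, s x w) = r w from rfl]
      field_simp
    · simp only [if_neg h]
      simp
  have hC : (∑ w, (if 0 < r w then r w else 0)) = ∑ w, r w := by
    refine Finset.sum_congr rfl fun w _ => ?_
    by_cases h : 0 < r w
    · rw [if_pos h]
    · rw [if_neg h, le_antisymm (not_lt.1 h) (hr0 w)]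
  calc (∑ x, ∑ y, ∑ w, (if 0 < q x y w then s x w * t y w / r w else 0))
      ≤ ∑ w, (if 0 < r w then r w else 0) := hB.trans (le_of_eq hB')
    _ = ∑ w, r w := hC
    _ = ∑ x, ∑ y, ∑ w, q x y w := (sum_rot q).symm
    _ = _ := eA.symm

lemma condMutInfo_nonneg (hp : ∀ ω, 0 ≤ p ω) (X : Ω → α) (Y : Ω → β) (W : Ω → γ) :
    0 ≤ condMutInfo p X Y W := by
  have hq0 : ∀ x y w, 0 ≤ prob p (fun ω => (X ω, Y ω, W ω)) (x, y, w) :=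
    fun _ _ _ => prob_nonneg hp _ _
  have core := cmi_core (fun x y w => prob p (fun ω => (X ω, Y ω, W ω)) (x, y, w)) hq0
  have e1 : entropy p (fun ω => (X ω, Y ω, W ω))
      = -∑ x, ∑ y, ∑ w, prob p (fun ω => (X ω, Y ω, W ω)) (x, y, w)
          * Real.logb 2 (prob p (fun ω => (X ω, Y ω, W ω)) (x, y, w)) := by
    unfold entropy
    rw [Fintype.sum_prod_type]
    congr 1
    exact Finset.sum_congr rfl fun x _ =>
      Fintype.sum_prod_type (f := fun yw => prob p (fun ω => (X ω, Y ω, W ω)) (x, yw)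
        * Real.logb 2 (prob p (fun ω => (X ω, Y ω, W ω)) (x, yw)))
  have e2 : entropy p (fun ω => (X ω, W ω))
      = -∑ x, ∑ y, ∑ w, prob p (fun ω => (X ω, Y ω, W ω)) (x, y, w)
          * Real.logb 2 (∑ y', prob p (fun ω => (X ω, Y ω, W ω)) (x, y', w)) := by
    unfold entropy
    rw [Fintype.sum_prod_type]
    congr 1
    refine Finset.sum_congr rfl fun x _ => ?_
    rw [Finset.sum_comm]
    refine Finset.sum_congr rfl fun w _ => ?_
    rw [marg_XW X Y W x w, Finset.sum_mul]
  have e3 : entropy p (fun ω => (Y ω, W ω))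
      = -∑ x, ∑ y, ∑ w, prob p (fun ω => (X ω, Y ω, W ω)) (x, y, w)
          * Real.logb 2 (∑ x', prob p (fun ω => (X ω, Y ω, W ω)) (x', y, w)) := by
    unfold entropy
    rw [Fintype.sum_prod_type]
    rw [show (∑ x, ∑ y, ∑ w, prob p (fun ω => (X ω, Y ω, W ω)) (x, y, w)
          * Real.logb 2 (∑ x', prob p (fun ω => (X ω, Y ω, W ω)) (x', y, w)))
        = ∑ y, ∑ w, ∑ x, prob p (fun ω => (X ω, Y ω, W ω)) (x, y, w)
          * Real.logb 2 (∑ x', prob p (fun ω => (X ω, Y ω, W ω)) (x', y, w)) from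
      sum_rot2 _]
    congr 1
    refine Finset.sum_congr rfl fun y _ => Finset.sum_congr rfl fun w _ => ?_
    rw [marg_YW X Y W y w, Finset.sum_mul]
  have e4 : entropy p W
      = -∑ x, ∑ y, ∑ w, prob p (fun ω => (X ω, Y ω, W ω)) (x, y, w)
          * Real.logb 2 (∑ x', ∑ y', prob p (fun ω => (X ω, Y ω, W ω)) (x', y', w)) := by
    unfold entropy
    rw [show (∑ x, ∑ y, ∑ w, prob p (fun ω => (X ω, Y ω, W ω)) (x, y, w)
          * Real.logb 2 (∑ x', ∑ y', prob p (fun ω => (X ω, Y ω, W ω)) (x', y', w)))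
        = ∑ w, ∑ x, ∑ y, prob p (fun ω => (X ω, Y ω, W ω)) (x, y, w)
          * Real.logb 2 (∑ x', ∑ y', prob p (fun ω => (X ω, Y ω, W ω)) (x', y', w)) from
      sum_rot _]
    congr 1
    refine Finset.sum_congr rfl fun w _ => ?_
    rw [marg_W X Y W w, Finset.sum_mul]
    exact Finset.sum_congr rfl fun x _ => by rw [Finset.sum_mul]
  unfold condMutInfo
  rw [e1, e2, e3, e4]
  linarith [core]

lemma mutInfo_nonneg (hp : IsPMF p) (X : Ω → α) (Y : Ω → β) :
    0 ≤ mutInfo p X Y := by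
  have h := condMutInfo_nonneg hp.1 X Y (fun _ => (() : Unit))
  unfold condMutInfo at h
  have e1 : entropy p (fun ω => (X ω, ())) = entropy p X :=
    entropy_comp_inj (f := fun a : α => (a, ())) (fun a b hab => (Prod.ext_iff.1 hab).1) X
  have e2 : entropy p (fun ω => (Y ω, ())) = entropy p Y :=
    entropy_comp_inj (f := fun a : β => (a, ())) (fun a b hab => (Prod.ext_iff.1 hab).1) Y
  have e3 : entropy p (fun ω => (X ω, Y ω, ())) = entropy p (fun ω => (X ω, Y ω)) :=
    entropy_comp_inj (f := fun c : α × β => (c.1, c.2, ()))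
      (fun a b hab => by
        simp only [Prod.mk.injEq] at hab
        exact Prod.ext hab.1 hab.2.1)
      (fun ω => (X ω, Y ω))
  have e4 : entropy p (fun _ : Ω => ()) = 0 := entropy_subsingleton hp _
  rw [e1, e2, e3, e4] at h
  unfold mutInfo
  linarith

end Lemmas
section Indep

variable {Ω : Type} [Fintype Ω] {p : Ω → ℝ}
variable {n : ℕ} {α : Fin n → Type} [∀ i, Fintype (α i)]

/-- Entropy of a tuple of mutually independent random variables is the sum of entropies. -/
lemma entropy_indep (hp : IsPMF p) (V : ∀ i, Ω → α i) (hV : MutIndep p V) :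
    entropy p (fun ω i => V i ω) = ∑ i, entropy p (V i) := by
  classical
  unfold entropy
  have step1 : (∑ x : ∀ i, α i, prob p (fun ω i => V i ω) x
        * Real.logb 2 (prob p (fun ω i => V i ω) x))
      = ∑ x : ∀ i, α i, (∏ i, prob p (V i) (x i))
        * Real.logb 2 (∏ i, prob p (V i) (x i)) :=
    Finset.sum_congr rfl fun x _ => by rw [hV x]
  rw [step1]
  -- pointwise expansion with the helper array g
  set g : ∀ i j : Fin n, α j → ℝ := fun i j a =>
    if j = i then prob p (V j) a * Real.logb 2 (prob p (V j) a) else prob p (V j) a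
    with hg
  have point : ∀ x : ∀ i, α i,
      (∏ i, prob p (V i) (x i)) * Real.logb 2 (∏ i, prob p (V i) (x i))
      = ∑ i, ∏ j, g i j (x j) := by
    intro x
    have hterm : ∀ i, (∏ j, g i j (x j))
        = (∏ j, prob p (V j) (x j)) * Real.logb 2 (prob p (V i) (x i)) := by
      intro i
      rw [← Finset.mul_prod_erase Finset.univ (fun j => g i j (x j)) (Finset.mem_univ i),
        ← Finset.mul_prod_erase Finset.univ (fun j => prob p (V j) (x j)) (Finset.mem_univ i)]
      have he : (∏ j ∈ Finset.univ.erase i, g i j (x j))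
          = ∏ j ∈ Finset.univ.erase i, prob p (V j) (x j) :=
        Finset.prod_congr rfl fun j hj => by
          simp only [hg, if_neg (Finset.ne_of_mem_erase hj)]
      rw [he]
      simp only [hg, if_pos rfl]
      ring
    by_cases hz : (∏ i, prob p (V i) (x i)) = 0
    · rw [hz, zero_mul]
      symm
      refine Finset.sum_eq_zero fun i _ => ?_
      rw [hterm i, hz]
      ring
    · have hlogb : Real.logb 2 (∏ i, prob p (V i) (x i))
          = ∑ i, Real.logb 2 (prob p (V i) (x i)) :=
        Real.logb_prod Finset.univ _ fun i _ => fun h0 =>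
          hz (Finset.prod_eq_zero (Finset.mem_univ i) h0)
      rw [hlogb, Finset.mul_sum]
      exact Finset.sum_congr rfl fun i _ => (hterm i).symm
  rw [Finset.sum_congr rfl fun x _ => point x]
  rw [Finset.sum_comm]
  have inner : ∀ i, (∑ x : ∀ i, α i, ∏ j, g i j (x j))
      = ∑ a, prob p (V i) a * Real.logb 2 (prob p (V i) a) := by
    intro i
    rw [← Fintype.prod_sum (fun j => g i j)]
    rw [← Finset.mul_prod_erase Finset.univ (fun j => ∑ a, g i j a) (Finset.mem_univ i)]
    have h1 : (∑ a, g i i a) = ∑ a, prob p (V i) a * Real.logb 2 (prob p (V i) a) :=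
      Finset.sum_congr rfl fun a _ => by simp only [hg, if_pos rfl]
    have h2 : (∏ j ∈ Finset.univ.erase i, ∑ a, g i j a) = 1 := by
      refine Finset.prod_eq_one fun j hj => ?_
      have : (∑ a, g i j a) = ∑ a, prob p (V j) a :=
        Finset.sum_congr rfl fun a _ => by
          simp only [hg, if_neg (Finset.ne_of_mem_erase hj)]
      rw [this, sum_prob, hp.2]
    rw [h1, h2, mul_one]
  rw [Finset.sum_congr rfl fun i _ => inner i]
  simp

end Indep
section Subadd

variable {Ω : Type} [Fintype Ω] {p : Ω → ℝ}
variable {n : ℕ} {α : Fin n → Type} [∀ i, Fintype (α i)]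

lemma entropy_subtuple_le (hp : IsPMF p) (V : ∀ i, Ω → α i) (S : Finset (Fin n)) :
    entropy p (fun ω (i : {i // i ∈ S}) => V i.1 ω) ≤ ∑ i ∈ S, entropy p (V i) := by
  classical
  induction S using Finset.induction_on with
  | empty =>
    haveI : IsEmpty {i : Fin n // i ∈ (∅ : Finset (Fin n))} := ⟨fun i => absurd i.2 (Finset.notMem_empty _)⟩
    rw [entropy_subsingleton hp _]
    simp
  | @insert a S' ha ih =>
    have hglue : entropy p (fun ω (i : {i // i ∈ insert a S'}) => V i.1 ω)
        = entropy p (fun ω => (V a ω, fun (i : {i // i ∈ S'}) => V i.1 ω)) := by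
      refine (entropy_comp_inj (f := fun w : (∀ i : {i // i ∈ insert a S'}, α i.1) =>
          ((w ⟨a, Finset.mem_insert_self a S'⟩ : α a),
           (fun i : {i // i ∈ S'} => w ⟨i.1, Finset.mem_insert_of_mem i.2⟩))) ?_ _).symm
      intro u v huv
      simp only [Prod.mk.injEq] at huv
      funext i
      rcases Finset.mem_insert.1 i.2 with h | h
      · have hi : i = ⟨a, Finset.mem_insert_self a S'⟩ := Subtype.ext h
        rw [hi]; exact huv.1
      · exact congrFun huv.2 ⟨i.1, h⟩
    rw [hglue, Finset.sum_insert ha]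
    have hmi := mutInfo_nonneg hp (V a) (fun ω (i : {i // i ∈ S'}) => V i.1 ω)
    unfold mutInfo at hmi
    simp only [] at hmi
    linarith [ih]

end Subadd
section Step5

variable {Ω : Type} [Fintype Ω] {p : Ω → ℝ}
variable {n : ℕ} {α : Fin n → Type} [∀ i, Fintype (α i)] {ζ : Type} [Fintype ζ]
section Step5

variable {Ω : Type} [Fintype Ω] {p : Ω → ℝ}
variable {n : ℕ} {α : Fin n → Type} [∀ i, Fintype (α i)] {ζ : Type} [Fintype ζ]

lemma step5_one (hp : IsPMF p) (V : ∀ i, Ω → α i) (Z : Ω → ζ)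
    (m : Fin n) (E : Finset (Fin n))
    (hlt : ∀ j : Fin n, j < m → j ∈ E) :
    entropy p (fun ω => (Z ω, fun i : {i // i ∈ insert m E} => V i.1 ω))
      - entropy p (fun ω => (Z ω, fun i : {i // i ∈ E} => V i.1 ω))
    ≤ entropy p (fun ω => (V m ω, Z ω, fun j : Fin m.val => V (Fin.castLE m.isLt.le j) ω))
      - entropy p (fun ω => (Z ω, fun j : Fin m.val => V (Fin.castLE m.isLt.le j) ω)) := by
  classical
  set F : Finset (Fin n) := E.filter (fun i => ¬ i < m) with hF
  have hmemF : ∀ i : Fin n, i ∈ F → i ∈ E := fun i hi => (Finset.mem_filter.1 hi).1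
  have hcastE : ∀ j : Fin m.val, Fin.castLE m.isLt.le j ∈ E := fun j =>
    hlt _ (Fin.lt_def.mpr j.isLt)
  -- the gluing map for (U, W) ↦ (Z, V_E)
  set f4 : ζ × (∀ i : {i // i ∈ E}, α i.1) →
      (∀ i : {i // i ∈ F}, α i.1) × ζ × (∀ j : Fin m.val, α (Fin.castLE m.isLt.le j)) :=
    fun zf => (fun i => zf.2 ⟨i.1, hmemF i.1 i.2⟩, zf.1,
               fun j => zf.2 ⟨Fin.castLE m.isLt.le j, hcastE j⟩) with hf4def
  have hf4 : Function.Injective f4 := by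
    rintro ⟨z, f⟩ ⟨z', f'⟩ h
    simp only [hf4def, Prod.mk.injEq] at h
    obtain ⟨h2, h1, h3⟩ := h
    refine Prod.ext h1 ?_
    funext i
    by_cases hi : i.1 < m
    · have hj := congrFun h3 ⟨i.1.val, Fin.lt_def.mp hi⟩
      have hcasteq : (⟨Fin.castLE m.isLt.le ⟨i.1.val, Fin.lt_def.mp hi⟩,
          hcastE _⟩ : {i // i ∈ E}) = ⟨i.1, i.2⟩ :=
        Subtype.ext (Fin.ext rfl)
      rw [hcasteq] at hj
      exact hj
    · have hiF : i.1 ∈ F := Finset.mem_filter.2 ⟨i.2, hi⟩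
      exact congrFun h2 ⟨i.1, hiF⟩
  -- the gluing map for (X, U, W) ↦ (Z, V_{insert m E})
  set f5 : ζ × (∀ i : {i // i ∈ insert m E}, α i.1) →
      α m × (∀ i : {i // i ∈ F}, α i.1) × ζ × (∀ j : Fin m.val, α (Fin.castLE m.isLt.le j)) :=
    fun zf => (zf.2 ⟨m, Finset.mem_insert_self m E⟩,
               fun i => zf.2 ⟨i.1, Finset.mem_insert_of_mem (hmemF i.1 i.2)⟩, zf.1,
               fun j => zf.2 ⟨Fin.castLE m.isLt.le j, Finset.mem_insert_of_mem (hcastE j)⟩)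
    with hf5def
  have hf5 : Function.Injective f5 := by
    rintro ⟨z, f⟩ ⟨z', f'⟩ h
    simp only [hf5def, Prod.mk.injEq] at h
    obtain ⟨h0, h2, h1, h3⟩ := h
    refine Prod.ext h1 ?_
    funext i
    rcases Finset.mem_insert.1 i.2 with hi | hi
    · have : i = ⟨m, Finset.mem_insert_self m E⟩ := Subtype.ext hi
      rw [this]; exact h0
    · by_cases hlti : i.1 < m
      · have hj := congrFun h3 ⟨i.1.val, Fin.lt_def.mp hlti⟩
        have hcasteq : (⟨Fin.castLE m.isLt.le ⟨i.1.val, Fin.lt_def.mp hlti⟩,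
            Finset.mem_insert_of_mem (hcastE _)⟩ : {i // i ∈ insert m E}) = ⟨i.1, i.2⟩ :=
          Subtype.ext (Fin.ext rfl)
        rw [hcasteq] at hj
        exact hj
      · have hiF : i.1 ∈ F := Finset.mem_filter.2 ⟨hi, hlti⟩
        exact congrFun h2 ⟨i.1, hiF⟩
  have hUW : entropy p (fun ω => ((fun i : {i // i ∈ F} => V i.1 ω), Z ω,
        (fun j : Fin m.val => V (Fin.castLE m.isLt.le j) ω)))
      = entropy p (fun ω => (Z ω, fun i : {i // i ∈ E} => V i.1 ω)) :=
    entropy_comp_inj hf4 (fun ω => (Z ω, fun i : {i // i ∈ E} => V i.1 ω))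
  have hXUW : entropy p (fun ω => (V m ω, (fun i : {i // i ∈ F} => V i.1 ω), Z ω,
        (fun j : Fin m.val => V (Fin.castLE m.isLt.le j) ω)))
      = entropy p (fun ω => (Z ω, fun i : {i // i ∈ insert m E} => V i.1 ω)) :=
    entropy_comp_inj hf5 (fun ω => (Z ω, fun i : {i // i ∈ insert m E} => V i.1 ω))
  have h := condMutInfo_nonneg hp.1 (V m) (fun ω (i : {i // i ∈ F}) => V i.1 ω)
    (fun ω => (Z ω, fun j : Fin m.val => V (Fin.castLE m.isLt.le j) ω))
  unfold condMutInfo at h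
  simp only [] at h
  rw [hUW, hXUW] at h
  linarith
lemma step5 (hp : IsPMF p) (V : ∀ i, Ω → α i) (Z : Ω → ζ) (D : Finset (Fin n)) :
    entropy p (fun ω => (Z ω, fun i => V i ω))
      - entropy p (fun ω => (Z ω, fun i : {i // i ∈ Dᶜ} => V i.1 ω))
    ≤ ∑ i ∈ D, (entropy p (fun ω =>
          (V i ω, Z ω, fun j : Fin i.val => V (Fin.castLE i.isLt.le j) ω))
        - entropy p (fun ω => (Z ω, fun j : Fin i.val => V (Fin.castLE i.isLt.le j) ω))) := by
  classical
  induction D using Finset.strongInduction with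
  | _ D ih =>
    rcases Finset.eq_empty_or_nonempty D with rfl | hne
    · have hUniv : entropy p (fun ω =>
            (Z ω, fun i : {i // i ∈ (∅ : Finset (Fin n))ᶜ} => V i.1 ω))
          = entropy p (fun ω => (Z ω, fun i => V i ω)) := by
        refine entropy_comp_inj (f := fun zw : ζ × (∀ i, α i) =>
          ((zw.1 : ζ), fun i : {i // i ∈ (∅ : Finset (Fin n))ᶜ} => zw.2 i.1)) ?_
          (fun ω => (Z ω, fun i => V i ω))
        rintro ⟨z, w⟩ ⟨z', w'⟩ h
        simp only [Prod.mk.injEq] at h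
        refine Prod.ext h.1 ?_
        funext i
        exact congrFun h.2 ⟨i, by simp⟩
      rw [hUniv]
      simp
    · set m := D.min' hne with hm
      have hmD : m ∈ D := D.min'_mem hne
      have ihm := ih (D.erase m) (Finset.erase_ssubset hmD)
      rw [Finset.compl_erase] at ihm
      have hone := step5_one hp V Z m Dᶜ
        (fun j hj => Finset.mem_compl.2 fun hjD => absurd (D.min'_le j hjD) (not_le.2 hj))
      rw [← Finset.add_sum_erase _ _ hmD]
      linarith

end Step5

/-- **Lemma 2**: for mutually independent `V i` and any `Z`,
`I(V_D ; Z ∣ V_{Dᶜ}) ≥ ∑_{i ∈ D} I(V i ; (Z, V_{<i}))`. -/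
theorem stmt0 {Ω : Type} [Fintype Ω] (p : Ω → ℝ) (hp : IsPMF p)
    {n : ℕ} {α : Fin n → Type} [∀ i, Fintype (α i)] {ζ : Type} [Fintype ζ]
    (V : ∀ i, Ω → α i) (Z : Ω → ζ) (hV : MutIndep p V) (D : Finset (Fin n)) :
    ∑ i ∈ D, mutInfo p (V i)
        (fun ω => (Z ω, fun j : Fin i.val => V (Fin.castLE i.isLt.le j) ω))
      ≤ condMutInfo p (fun ω (i : {i // i ∈ D}) => V i.1 ω) Z
          (fun ω (i : {i // i ∈ Dᶜ}) => V i.1 ω) := by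
  classical
  have hG1 : entropy p (fun ω => ((fun i : {i // i ∈ D} => V i.1 ω),
        (fun i : {i // i ∈ Dᶜ} => V i.1 ω)))
      = entropy p (fun ω i => V i ω) := by
    refine entropy_comp_inj (f := fun w : (∀ i, α i) =>
      ((fun i : {i // i ∈ D} => w i.1), (fun i : {i // i ∈ Dᶜ} => w i.1))) ?_ (fun ω i => V i ω)
    intro u v h
    simp only [Prod.mk.injEq] at h
    funext i
    by_cases hi : i ∈ D
    · exact congrFun h.1 ⟨i, hi⟩
    · exact congrFun h.2 ⟨i, Finset.mem_compl.2 hi⟩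
  have hG2 : entropy p (fun ω => ((fun i : {i // i ∈ D} => V i.1 ω), Z ω,
        (fun i : {i // i ∈ Dᶜ} => V i.1 ω)))
      = entropy p (fun ω => (Z ω, fun i => V i ω)) := by
    refine entropy_comp_inj (f := fun zw : ζ × (∀ i, α i) =>
      ((fun i : {i // i ∈ D} => zw.2 i.1), zw.1, (fun i : {i // i ∈ Dᶜ} => zw.2 i.1))) ?_
      (fun ω => (Z ω, fun i => V i ω))
    rintro ⟨z, u⟩ ⟨z', v⟩ h
    simp only [Prod.mk.injEq] at h
    obtain ⟨h1, h2, h3⟩ := h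
    refine Prod.ext h2 ?_
    funext i
    by_cases hi : i ∈ D
    · exact congrFun h1 ⟨i, hi⟩
    · exact congrFun h3 ⟨i, Finset.mem_compl.2 hi⟩
  have hInd := entropy_indep hp V hV
  have hSub := entropy_subtuple_le hp V Dᶜ
  have hS5 := step5 hp V Z D
  have hsplit : (∑ i, entropy p (V i))
      = ∑ i ∈ D, entropy p (V i) + ∑ i ∈ Dᶜ, entropy p (V i) :=
    (Finset.sum_add_sum_compl D _).symm
  have hexp : ∀ i ∈ D, mutInfo p (V i)
      (fun ω => (Z ω, fun j : Fin i.val => V (Fin.castLE i.isLt.le j) ω))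
      = entropy p (V i)
        - (entropy p (fun ω =>
            (V i ω, Z ω, fun j : Fin i.val => V (Fin.castLE i.isLt.le j) ω))
          - entropy p (fun ω => (Z ω, fun j : Fin i.val => V (Fin.castLE i.isLt.le j) ω))) := by
    intro i _
    unfold mutInfo
    ring
  rw [Finset.sum_congr rfl hexp, Finset.sum_sub_distrib]
  unfold condMutInfo
  simp only []
  rw [hG1, hG2]
  linarith [hS5, hSub, hInd, hsplit]
end Step5
end
end

section
/- (Corollary 4 of the paper, channel-independent form.) Under the secrecy-code setup, with I_total := I((V_1,…,V_n); Z), the following two-sided bound holds: I_total − r − Σ_{i∈B} C_i ≤ I(V_A; Z | V_B) ≤ I_total − r + Σ_{l∈R} (1 − C_l), where C_i := I(V_i; (Z, V_{{1,…,i−1}})) and r = |R|. -/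
open scoped Classical

noncomputable section

/-!
Write `g S = H(Z, V_S)` for `S ⊆ {1,…,n}`. Uniform bits have `H(V_S) = |S|`, so every quantity
in the statement is a cardinality plus values of `g`: `I_total = n + g ∅ - g [n]`,
`I(V_A; Z | V_B) = |A| + g B - g (A ∪ B)` and `C_i = 1 - (g {j ≤ i} - g {j < i})`.
Submodularity of entropy says that the increments of `g` shrink as the set grows. Telescoping
`g` along `B` from `∅`, resp. along `R` from `A ∪ B`, and comparing each increment with the
prefix increment `g {j ≤ i} - g {j < i}` yields the two bounds, together with
`g (A ∪ B) ≤ g [n]` and `g B ≤ |B| + g ∅`.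
-/

open Finset

section Entropy

variable {Ω α β γ : Type} [Fintype Ω] {p : Ω → ℝ}

theorem sum_prob_mul (p : Ω → ℝ) [Fintype α] (X : Ω → α) (f : α → ℝ) :
    ∑ x, prob p X x * f x = ∑ ω, p ω * f (X ω) := by
  simp only [prob, sum_mul, ite_mul, zero_mul]
  rw [sum_comm]
  simp

theorem entropy_eq_neg_sum (p : Ω → ℝ) [Fintype α] (X : Ω → α) :
    entropy p X = -∑ ω, p ω * Real.logb 2 (prob p X (X ω)) := by
  rw [entropy, sum_prob_mul p X fun x => Real.logb 2 (prob p X x)]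

theorem entropy_congr [Fintype α] [Fintype β] {X : Ω → α} {Y : Ω → β}
    (h : ∀ ω ω', X ω = X ω' ↔ Y ω = Y ω') : entropy p X = entropy p Y := by
  have hprob : ∀ ω, prob p X (X ω) = prob p Y (Y ω) := fun ω =>
    sum_congr rfl fun ω' _ => if_congr (h ω' ω) rfl rfl
  simp only [entropy_eq_neg_sum, hprob]

theorem sum_prob_pair_left (p : Ω → ℝ) [Fintype α] (X : Ω → α) (W : Ω → γ) (w : γ) :
    ∑ x, prob p (fun ω => (X ω, W ω)) (x, w) = prob p W w := by
  simp only [prob, Prod.mk.injEq]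
  rw [sum_comm]
  refine sum_congr rfl fun ω _ => ?_
  by_cases hw : W ω = w <;> simp [hw]

theorem entropy_eq_logb_card [Fintype α] {X : Ω → α}
    (h : ∀ x, prob p X x = (Fintype.card α : ℝ)⁻¹) : entropy p X = Real.logb 2 (Fintype.card α) := by
  rcases eq_or_ne (Fintype.card α : ℝ) 0 with h0 | h0
  · simp [entropy, h, h0]
  · simp only [entropy, h, sum_const, card_univ, nsmul_eq_mul, Real.logb_inv]
    field_simp

namespace IsPMF

variable (hp : IsPMF p)
include hp

theorem prob_nonneg (X : Ω → α) (x : α) : 0 ≤ prob p X x :=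
  sum_nonneg fun ω _ => by split_ifs <;> simp [hp.1 ω]

theorem prob_mono {X : Ω → α} {Y : Ω → β} {x : α} {y : β} (h : ∀ ω, X ω = x → Y ω = y) :
    prob p X x ≤ prob p Y y :=
  sum_le_sum fun ω _ => by
    by_cases hx : X ω = x
    · simp [hx, h ω hx]
    · simp only [if_neg hx]
      split_ifs <;> simp [hp.1 ω]

theorem le_prob_self (X : Ω → α) (ω : Ω) : p ω ≤ prob p X (X ω) := by
  simpa [prob] using hp.prob_mono (X := id) (x := ω) (Y := X) (y := X ω) fun _ h => h ▸ rfl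

theorem prob_pos_of_pos {ω : Ω} (hω : 0 < p ω) (X : Ω → α) : 0 < prob p X (X ω) :=
  hω.trans_le (hp.le_prob_self X ω)

theorem sum_prob [Fintype α] (X : Ω → α) : ∑ x, prob p X x = 1 := by
  simpa [hp.2] using sum_prob_mul p X fun _ => 1

theorem entropy_comp_le [Fintype α] [Fintype β] (F : β → α) (Y : Ω → β) :
    entropy p (fun ω => F (Y ω)) ≤ entropy p Y := by
  rw [entropy_eq_neg_sum, entropy_eq_neg_sum, neg_le_neg_iff]
  refine sum_le_sum fun ω _ => ?_
  rcases (hp.1 ω).eq_or_lt with h0 | h0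
  · simp [← h0]
  · exact mul_le_mul_of_nonneg_left (Real.logb_le_logb_of_le one_lt_two
      (hp.prob_pos_of_pos h0 Y) (hp.prob_mono fun _ h => h ▸ rfl)) h0.le

theorem entropy_of_subsingleton [Fintype α] [Subsingleton α] (X : Ω → α) : entropy p X = 0 := by
  simp [entropy_eq_neg_sum, prob, eq_iff_true_of_subsingleton, hp.2]

theorem sum_mul_logb_nonpos {f : Ω → ℝ} (hf : ∀ ω, 0 < p ω → 0 < f ω)
    (h1 : ∑ ω, p ω * f ω ≤ 1) : ∑ ω, p ω * Real.logb 2 (f ω) ≤ 0 := by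
  have hlog : 0 < Real.log 2 := Real.log_pos one_lt_two
  have hterm : ∀ ω, p ω * Real.logb 2 (f ω) ≤ (p ω * f ω - p ω) / Real.log 2 := by
    intro ω
    rcases (hp.1 ω).eq_or_lt with h0 | h0
    · simp [← h0]
    · rw [Real.logb, mul_div_assoc', div_le_div_iff_of_pos_right hlog, ← mul_sub_one]
      exact mul_le_mul_of_nonneg_left (Real.log_le_sub_one_of_pos (hf ω h0)) h0.le
  calc ∑ ω, p ω * Real.logb 2 (f ω) ≤ ∑ ω, (p ω * f ω - p ω) / Real.log 2 :=
        sum_le_sum fun ω _ => hterm ω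
    _ = (∑ ω, p ω * f ω - 1) / Real.log 2 := by
        rw [← sum_div, sum_sub_distrib, hp.2]
    _ ≤ 0 := div_nonpos_of_nonpos_of_nonneg (by linarith) hlog.le

theorem sum_prob_pair_mul_div [Fintype α] [Fintype β] [Fintype γ]
    (X : Ω → α) (Y : Ω → β) (W : Ω → γ) :
    ∑ t : α × β × γ, prob p (fun ω => (X ω, W ω)) (t.1, t.2.2)
      * prob p (fun ω => (Y ω, W ω)) t.2 / prob p W t.2.2 = 1 := by
  calc ∑ t : α × β × γ, prob p (fun ω => (X ω, W ω)) (t.1, t.2.2)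
        * prob p (fun ω => (Y ω, W ω)) t.2 / prob p W t.2.2
      = ∑ w, (∑ x, prob p (fun ω => (X ω, W ω)) (x, w))
        * (∑ y, prob p (fun ω => (Y ω, W ω)) (y, w)) / prob p W w := by
        simp only [Fintype.sum_prod_type, sum_mul_sum, sum_div]
        exact sum_comm_cycle
    _ = ∑ w, prob p W w := by
        refine sum_congr rfl fun w _ => ?_
        rw [sum_prob_pair_left, sum_prob_pair_left]
        rcases eq_or_ne (prob p W w) 0 with h | h
        · simp [h]
        · field_simp
    _ = 1 := hp.sum_prob W

theorem entropy_submodular [Fintype α] [Fintype β] [Fintype γ]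
    (X : Ω → α) (Y : Ω → β) (W : Ω → γ) :
    entropy p (fun ω => (X ω, Y ω, W ω)) + entropy p W
      ≤ entropy p (fun ω => (X ω, W ω)) + entropy p (fun ω => (Y ω, W ω)) := by
  set qa := prob p (fun ω => (X ω, W ω))
  set qb := prob p (fun ω => (Y ω, W ω))
  set qc := prob p (fun ω => (X ω, Y ω, W ω))
  set qd := prob p W
  -- The defect of submodularity is `-E[log F]`, and `E[F] ≤ 1` by summing out `x` and `y`.
  set F : α × β × γ → ℝ := fun t => qa (t.1, t.2.2) * qb t.2 / (qc t * qd t.2.2)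
  have hF_pos : ∀ ω, 0 < p ω → 0 < F (X ω, Y ω, W ω) := fun ω hω => by
    have pos {δ : Type} (Q : Ω → δ) : 0 < prob p Q (Q ω) := hp.prob_pos_of_pos hω Q
    exact div_pos (mul_pos (pos _) (pos _)) (mul_pos (pos _) (pos W))
  have hF_sum : ∑ ω, p ω * F (X ω, Y ω, W ω) ≤ 1 := by
    rw [← sum_prob_mul p (fun ω => (X ω, Y ω, W ω)) F, ← hp.sum_prob_pair_mul_div X Y W]
    refine sum_le_sum fun t _ => ?_
    rcases (hp.prob_nonneg _ t).eq_or_lt with h0 | h0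
    · rw [← h0, zero_mul]
      exact div_nonneg (mul_nonneg (hp.prob_nonneg _ _) (hp.prob_nonneg _ _)) (hp.prob_nonneg _ _)
    · have hd : 0 < qd t.2.2 := h0.trans_le (hp.prob_mono fun _ h => by rw [← h])
      have hc : qc t ≠ 0 := h0.ne'
      refine le_of_eq (show qc t * F t = qa (t.1, t.2.2) * qb t.2 / qd t.2.2 by
        simp only [F]
        field_simp)
  have hlog_F : ∀ ω, p ω * Real.logb 2 (F (X ω, Y ω, W ω))
      = p ω * Real.logb 2 (qa (X ω, W ω)) + p ω * Real.logb 2 (qb (Y ω, W ω))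
        - p ω * Real.logb 2 (qc (X ω, Y ω, W ω)) - p ω * Real.logb 2 (qd (W ω)) := fun ω => by
    rcases (hp.1 ω).eq_or_lt with h0 | h0
    · simp [← h0]
    · have pos {δ : Type} (Q : Ω → δ) : prob p Q (Q ω) ≠ 0 := (hp.prob_pos_of_pos h0 Q).ne'
      rw [Real.logb_div (mul_ne_zero (pos _) (pos _)) (mul_ne_zero (pos _) (pos W)),
        Real.logb_mul (pos _) (pos _), Real.logb_mul (pos _) (pos W)]
      ring
  have := hp.sum_mul_logb_nonpos hF_pos hF_sum
  simp only [hlog_F, sum_add_distrib, sum_sub_distrib] at this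
  simp only [entropy_eq_neg_sum]
  linarith

theorem entropy_pair_le [Fintype α] [Fintype β] (X : Ω → α) (Y : Ω → β) :
    entropy p (fun ω => (X ω, Y ω)) ≤ entropy p X + entropy p Y := by
  have h := hp.entropy_submodular X Y fun _ => ()
  have e {δ : Type} [Fintype δ] (Q : Ω → δ) : entropy p (fun ω => (Q ω, ())) = entropy p Q :=
    entropy_congr fun ω ω' => by simp
  rwa [hp.entropy_of_subsingleton (fun _ => ()), add_zero, e, e,
    entropy_congr (X := fun ω => (X ω, Y ω, ())) (Y := fun ω => (X ω, Y ω)) fun ω ω' => by simp] at h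

theorem entropy_le_logb_card [Fintype α] (X : Ω → α) :
    entropy p X ≤ Real.logb 2 (Fintype.card α) := by
  set c : ℝ := (Fintype.card α : ℝ)
  set f : Ω → ℝ := fun ω => (c * prob p X (X ω))⁻¹
  have hc (ω : Ω) : 0 < c := Nat.cast_pos.2 (Fintype.card_pos_iff.2 ⟨X ω⟩)
  have hf_pos : ∀ ω, 0 < p ω → 0 < f ω := fun ω hω =>
    inv_pos.2 (mul_pos (hc ω) (hp.prob_pos_of_pos hω X))
  have hf_sum : ∑ ω, p ω * f ω ≤ 1 := by
    rw [← sum_prob_mul p X fun x => (c * prob p X x)⁻¹]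
    calc ∑ x, prob p X x * (c * prob p X x)⁻¹ ≤ ∑ _x : α, c⁻¹ := sum_le_sum fun x _ => by
          rcases (hp.prob_nonneg X x).eq_or_lt with h0 | h0
          · simp [← h0, c]
          · rw [mul_inv, mul_left_comm, mul_inv_cancel₀ h0.ne', mul_one]
      _ ≤ 1 := by
          rw [sum_const, card_univ, nsmul_eq_mul]
          exact mul_inv_le_one
  have hlog_f : ∀ ω, p ω * Real.logb 2 (f ω)
      = -(p ω * Real.logb 2 c) - p ω * Real.logb 2 (prob p X (X ω)) := fun ω => by
    rcases (hp.1 ω).eq_or_lt with h0 | h0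
    · simp [← h0]
    · rw [Real.logb_inv, Real.logb_mul (hc ω).ne' (hp.prob_pos_of_pos h0 X).ne']
      ring
  have := hp.sum_mul_logb_nonpos hf_pos hf_sum
  simp only [hlog_f, sum_sub_distrib, sum_neg_distrib, ← sum_mul, hp.2] at this
  rw [entropy_eq_neg_sum]
  linarith

end IsPMF
end Entropy

section SetFunction

def Submodular {ι : Type} [DecidableEq ι] (g : Finset ι → ℝ) : Prop :=
  ∀ ⦃S T : Finset ι⦄, T ⊆ S → ∀ i, g (insert i S) - g S ≤ g (insert i T) - g T

variable {ι : Type} [LinearOrder ι]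

theorem sub_eq_sum_insert_filter_lt (g : Finset ι → ℝ) (S T : Finset ι) :
    g (S ∪ T) - g S
      = ∑ l ∈ T, (g (insert l (S ∪ T.filter (· < l))) - g (S ∪ T.filter (· < l))) := by
  induction T using induction_on_max with
  | empty => simp
  | insert a T ha ih =>
    have hfa : (insert a T).filter (· < a) = T := by
      rw [filter_insert, if_neg (lt_irrefl a), filter_true_of_mem ha]
    have hfl : ∀ l ∈ T, (insert a T).filter (· < l) = T.filter (· < l) := fun l hl => by
      rw [filter_insert, if_neg (ha l hl).not_gt]
    rw [sum_insert fun h => lt_irrefl a (ha a h), hfa,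
      sum_congr rfl fun l hl => by rw [hfl l hl], ← ih, union_insert]
    ring

variable {g : Finset ι → ℝ} [LocallyFiniteOrderBot ι]

theorem Submodular.sum_prefix_increment_le (hg : Submodular g) (T : Finset ι) :
    ∑ l ∈ T, (g (insert l (Iio l)) - g (Iio l)) ≤ g T - g ∅ := by
  have h := sub_eq_sum_insert_filter_lt g ∅ T
  simp only [empty_union] at h
  rw [h]
  exact sum_le_sum fun l _ =>
    hg (fun j hj => mem_Iio.2 (mem_filter.1 hj).2) l

theorem Submodular.sub_le_sum_prefix_increment [Fintype ι] (hg : Submodular g)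
    {S T : Finset ι} (hST : S ∪ T = univ) :
    g univ - g S ≤ ∑ l ∈ T, (g (insert l (Iio l)) - g (Iio l)) := by
  rw [← hST, sub_eq_sum_insert_filter_lt g S T]
  refine sum_le_sum fun l _ => hg (fun j hj => ?_) l
  have hj' : j ∈ S ∪ T := hST ▸ mem_univ j
  simp only [mem_union, mem_filter] at hj' ⊢
  exact hj'.imp_right fun h => ⟨h, mem_Iio.1 hj⟩

end SetFunction

section Bits

variable {Ω ζ ι β : Type} [Fintype Ω] [Fintype ζ] [DecidableEq ι] [Fintype β] {p : Ω → ℝ}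

def jointEntropy (p : Ω → ℝ) (Z : Ω → ζ) (V : ι → Ω → β) (S : Finset ι) : ℝ :=
  entropy p fun ω => (Z ω, fun i : S => V i ω)

theorem IsPMF.jointEntropy_mono (hp : IsPMF p) (Z : Ω → ζ) (V : ι → Ω → β) {S T : Finset ι}
    (hST : S ⊆ T) : jointEntropy p Z V S ≤ jointEntropy p Z V T :=
  hp.entropy_comp_le (fun zv : ζ × (T → β) => (zv.1, fun i : S => zv.2 ⟨i, hST i.2⟩))
    fun ω => (Z ω, fun i : T => V i ω)

theorem IsPMF.submodular_jointEntropy (hp : IsPMF p) (Z : Ω → ζ) (V : ι → Ω → β) :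
    Submodular (jointEntropy p Z V) := by
  intro S T hTS i
  have h := hp.entropy_submodular (V i) (fun ω (j : S) => V j ω)
    (fun ω => (Z ω, fun j : T => V j ω))
  have e₁ : entropy p (fun ω => (V i ω, (fun j : S => V j ω), Z ω, fun j : T => V j ω))
      = jointEntropy p Z V (insert i S) :=
    entropy_congr fun ω ω' => by simp [funext_iff]; aesop
  have e₂ : entropy p (fun ω => (V i ω, Z ω, fun j : T => V j ω))
      = jointEntropy p Z V (insert i T) :=
    entropy_congr fun ω ω' => by simp [funext_iff]; aesop
  have e₃ : entropy p (fun ω => ((fun j : S => V j ω), Z ω, fun j : T => V j ω))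
      = jointEntropy p Z V S :=
    entropy_congr fun ω ω' => by simp [funext_iff]; aesop
  rw [e₁, e₂, e₃] at h
  unfold jointEntropy at h ⊢
  linarith

variable [Fintype ι] {V : ι → Ω → Bool}

theorem entropy_eq_card_of_uniform
    (hV : ∀ v : ι → Bool, prob p (fun ω i => V i ω) v = (1 / 2 : ℝ) ^ Fintype.card ι) :
    entropy p (fun ω i => V i ω) = Fintype.card ι := by
  rw [entropy_eq_logb_card fun v => by simp [hV]]
  simp [Real.logb_pow]

theorem IsPMF.entropy_restrict_of_uniform (hp : IsPMF p)
    (hV : ∀ v : ι → Bool, prob p (fun ω i => V i ω) v = (1 / 2 : ℝ) ^ Fintype.card ι)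
    (S : Finset ι) : entropy p (fun ω (i : S) => V i ω) = S.card := by
  have hlog (T : Finset ι) : Real.logb 2 (Fintype.card (T → Bool)) = T.card := by
    simp [Real.logb_pow]
  have hS := (hp.entropy_le_logb_card fun ω (i : S) => V i ω).trans_eq (hlog S)
  have hSc := (hp.entropy_le_logb_card fun ω (i : (Sᶜ : Finset ι)) => V i ω).trans_eq (hlog Sᶜ)
  have hsplit : entropy p (fun ω i => V i ω)
      = entropy p (fun ω => ((fun i : S => V i ω), fun i : (Sᶜ : Finset ι) => V i ω)) :=
    entropy_congr fun ω ω' => by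
      simp only [funext_iff, Prod.mk.injEq, Subtype.forall, mem_compl]
      exact ⟨fun h => ⟨fun i _ => h i, fun i _ => h i⟩, fun h i => (em (i ∈ S)).elim (h.1 i) (h.2 i)⟩
  have hcard : (S.card : ℝ) + (Sᶜ.card : ℝ) = Fintype.card ι := by
    exact_mod_cast card_add_card_compl S
  have := hp.entropy_pair_le (fun ω (i : S) => V i ω) fun ω (i : (Sᶜ : Finset ι)) => V i ω
  rw [← hsplit, entropy_eq_card_of_uniform hV] at this
  linarith

variable (hV : ∀ v : ι → Bool, prob p (fun ω i => V i ω) v = (1 / 2 : ℝ) ^ Fintype.card ι)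
  (Z : Ω → ζ)
include hV

theorem IsPMF.jointEntropy_le_card_add (hp : IsPMF p) (S : Finset ι) :
    jointEntropy p Z V S ≤ S.card + jointEntropy p Z V ∅ := by
  have e : jointEntropy p Z V ∅ = entropy p Z := entropy_congr fun ω ω' => by simp [funext_iff]
  rw [e, ← hp.entropy_restrict_of_uniform hV S, add_comm]
  exact hp.entropy_pair_le Z _

theorem mutInfo_eq_card_add_jointEntropy :
    mutInfo p (fun ω i => V i ω) Z
      = Fintype.card ι + jointEntropy p Z V ∅ - jointEntropy p Z V univ := by
  have e₁ : entropy p Z = jointEntropy p Z V ∅ := entropy_congr fun ω ω' => by simp [funext_iff]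
  have e₂ : entropy p (fun ω => ((fun i => V i ω), Z ω)) = jointEntropy p Z V univ :=
    entropy_congr fun ω ω' => by simp [funext_iff]; aesop
  rw [mutInfo, entropy_eq_card_of_uniform hV, e₁, e₂]

theorem IsPMF.condMutInfo_eq_card_add_jointEntropy (hp : IsPMF p) {A B : Finset ι}
    (hAB : Disjoint A B) :
    condMutInfo p (fun ω (i : A) => V i ω) Z (fun ω (i : B) => V i ω)
      = A.card + jointEntropy p Z V B - jointEntropy p Z V (A ∪ B) := by
  have e₁ : entropy p (fun ω => ((fun i : A => V i ω), fun i : B => V i ω))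
      = entropy p (fun ω (i : (A ∪ B : Finset ι)) => V i ω) :=
    entropy_congr fun ω ω' => by simp [funext_iff]; aesop
  have e₂ : entropy p (fun ω => ((fun i : A => V i ω), Z ω, fun i : B => V i ω))
      = jointEntropy p Z V (A ∪ B) :=
    entropy_congr fun ω ω' => by simp [funext_iff]; aesop
  rw [condMutInfo, e₁, e₂, hp.entropy_restrict_of_uniform hV, hp.entropy_restrict_of_uniform hV,
    card_union_of_disjoint hAB]
  unfold jointEntropy
  push_cast
  ring

end Bits

theorem Fin.castLE_restrict_eq_iff {n : ℕ} {α β : Type} (V : Fin n → α → β) (i : Fin n)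
    (a a' : α) :
    (fun j : Fin i.val => V (Fin.castLE i.isLt.le j) a)
        = (fun j : Fin i.val => V (Fin.castLE i.isLt.le j) a')
      ↔ (fun j : Iio i => V j a) = (fun j : Iio i => V j a') := by
  simp only [funext_iff, Subtype.forall, mem_Iio]
  exact ⟨fun h j hj => h ⟨j, hj⟩, fun h j => h _ j.isLt⟩

theorem IsPMF.mutInfo_prefix_eq {Ω ζ : Type} [Fintype Ω] [Fintype ζ] {p : Ω → ℝ} (hp : IsPMF p)
    {n : ℕ} {V : Fin n → Ω → Bool}
    (hV : ∀ v : Fin n → Bool, prob p (fun ω i => V i ω) v = (1 / 2 : ℝ) ^ Fintype.card (Fin n))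
    (Z : Ω → ζ) (i : Fin n) :
    mutInfo p (V i) (fun ω => (Z ω, fun j : Fin i.val => V (Fin.castLE i.isLt.le j) ω))
      = 1 - (jointEntropy p Z V (insert i (Iio i)) - jointEntropy p Z V (Iio i)) := by
  have e₁ : entropy p (V i) = 1 := by
    rw [entropy_congr (Y := fun ω (j : ({i} : Finset (Fin n))) => V j ω) fun ω ω' => by
      simp [funext_iff], hp.entropy_restrict_of_uniform hV, card_singleton, Nat.cast_one]
  have e₂ : entropy p (fun ω => (Z ω, fun j : Fin i.val => V (Fin.castLE i.isLt.le j) ω))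
      = jointEntropy p Z V (Iio i) :=
    entropy_congr fun ω ω' => by
      rw [Prod.mk.injEq, Prod.mk.injEq, Fin.castLE_restrict_eq_iff]
  have e₃ : entropy p (fun ω => (V i ω, Z ω, fun j : Fin i.val => V (Fin.castLE i.isLt.le j) ω))
      = jointEntropy p Z V (insert i (Iio i)) :=
    entropy_congr fun ω ω' => by
      rw [Prod.mk.injEq, Prod.mk.injEq, Fin.castLE_restrict_eq_iff]
      simp only [Prod.mk.injEq, funext_iff, Subtype.forall, forall_mem_insert]
      tauto
  rw [mutInfo, e₁, e₂, e₃]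
  ring

/-- **Corollary 4** (channel-independent form). In the secrecy-code setup, with
`I_total = I((V 1,…,V n) ; Z)`,
`I_total − r − ∑_{i∈B} C_i ≤ I(V_A ; Z ∣ V_B) ≤ I_total − r + ∑_{l∈R} (1 − C_l)`,
where `C_i = I(V i ; (Z, V_{<i}))` and `r = |R|`. -/
theorem stmt5 {Ω : Type} [Fintype Ω] (p : Ω → ℝ) (hp : IsPMF p)
    {n : ℕ} (V : Fin n → Ω → Bool) {ζ : Type} [Fintype ζ] (Z : Ω → ζ)
    (hV : ∀ v : Fin n → Bool, prob p (fun ω i => V i ω) v = (1 / 2 : ℝ) ^ n)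
    (A R B : Finset (Fin n))
    (hAR : Disjoint A R) (hAB : Disjoint A B) (hRB : Disjoint R B)
    (hcover : A ∪ R ∪ B = Finset.univ) :
    (mutInfo p (fun ω (i : Fin n) => V i ω) Z - (R.card : ℝ)
        - ∑ i ∈ B, mutInfo p (V i)
            (fun ω => (Z ω, fun j : Fin i.val => V (Fin.castLE i.isLt.le j) ω))
      ≤ condMutInfo p (fun ω (i : {i // i ∈ A}) => V i.1 ω) Z
          (fun ω (i : {i // i ∈ B}) => V i.1 ω))
    ∧ (condMutInfo p (fun ω (i : {i // i ∈ A}) => V i.1 ω) Z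
          (fun ω (i : {i // i ∈ B}) => V i.1 ω)
      ≤ mutInfo p (fun ω (i : Fin n) => V i ω) Z - (R.card : ℝ)
        + ∑ l ∈ R, (1 - mutInfo p (V l)
            (fun ω => (Z ω, fun j : Fin l.val => V (Fin.castLE l.isLt.le j) ω)))) := by
  have hV' : ∀ v : Fin n → Bool,
      prob p (fun ω i => V i ω) v = (1 / 2 : ℝ) ^ Fintype.card (Fin n) := by
    rwa [Fintype.card_fin]
  have hg := hp.submodular_jointEntropy Z V
  have hB := hg.sum_prefix_increment_le B
  have hR := hg.sub_le_sum_prefix_increment ((union_right_comm A B R).trans hcover)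
  have hmono := hp.jointEntropy_mono Z V (subset_univ (A ∪ B))
  have hsub := hp.jointEntropy_le_card_add hV' Z B
  have hn : (n : ℝ) = A.card + R.card + B.card := by
    have h := congrArg card hcover
    rw [card_union_of_disjoint (disjoint_union_left.2 ⟨hAB, hRB⟩),
      card_union_of_disjoint hAR, card_univ, Fintype.card_fin] at h
    exact_mod_cast h.symm
  simp only [hp.mutInfo_prefix_eq hV' Z, mutInfo_eq_card_add_jointEntropy hV' Z,
    hp.condMutInfo_eq_card_add_jointEntropy hV' Z hAB, Fintype.card_fin, sum_sub_distrib,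
    sub_sub_cancel, sum_const, nsmul_eq_mul, mul_one]
  simp only [sum_sub_distrib] at hB hR
  constructor <;> linarith
end
end

section
/- (Proposition 3 of the paper, instantiated for a wiretap BEC.) In the polar-secrecy-code-over-BEC setup, the mutual information security leakage satisfies I(U; Z) ≥ max( Σ_{i∈A} C_i + Σ_{j∈R} C_j − r , 0 ). -/
/-!
The observations `Z`, `(U, Z)`, `(Z', V'_{<i})` and `(V'_i, Z', V'_{<i})` are, up to injective
recodings, pairs `(Θ, L_Θ k)` with `k` uniform on an `F₂`-vector space and `L_θ` linear: the BEC
output of `x` determines, and is determined by, the erasure pattern `θ` together with `x` with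
its erased coordinates set to zero. Given `Θ = θ` such a pair is uniform on the range of `L_θ`,
so its entropy is `H(Θ) + E[rank L_Θ]`. Writing `r_θ(S)` for the rank of the rows indexed by `S`
of the generator matrix with its erased columns zeroed, this gives
`C_i = E[r_Θ(≥ i) - r_Θ(> i)]` and `I(U; Z) = E[r_Θ(A ∪ R) - r_Θ(R)]`.
By submodularity of `r_θ`, `∑_{i ∈ A ∪ R} (r_θ(≥ i) - r_θ(> i))` is at most the telescoping sum
`∑_{i ∈ A ∪ R} (r_θ((A ∪ R) ∩ [i, ∞)) - r_θ((A ∪ R) ∩ (i, ∞))) = r_θ(A ∪ R)`; together with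
`r_θ(R) ≤ |R|` and monotonicity of `r_θ` this gives both bounds.
-/

open scoped Classical

noncomputable section

/-- Arıkan's 2×2 polarization kernel over `F_2`. -/
def Gmat : Matrix (Fin 2) (Fin 2) (ZMod 2) := !![1, 0; 1, 1]

/-- The `m`-th Kronecker power `G^{⊗m}` of the kernel, an `2^m × 2^m` matrix over `F_2`. -/
def GPow : (m : ℕ) → Matrix (Fin (2 ^ m)) (Fin (2 ^ m)) (ZMod 2)
  | 0 => 1
  | m + 1 =>
    Matrix.reindex (finProdFinEquiv.trans (finCongr (by ring)))
      (finProdFinEquiv.trans (finCongr (by ring)))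
      (Matrix.kroneckerMap (· * ·) Gmat (GPow m))

/-- The canonical joint pmf of `(V', Θ)`, where `V'` is uniform on `F_2^{2^m}` and
`Θ` is an independent i.i.d. Bernoulli(ε) erasure pattern. -/
def becPMF (m : ℕ) (ε : ℝ) : (Fin (2 ^ m) → ZMod 2) × (Fin (2 ^ m) → Bool) → ℝ :=
  fun vθ => (1 / 2 : ℝ) ^ (2 ^ m) * ∏ j, (if vθ.2 j then ε else 1 - ε)

/-- The capacity of the `i`-th bit-channel of the polarization transform over BEC(ε):
`C_i = I(V'_i ; (Z', V'_{<i}))` where `V'` is uniform on `F_2^{2^m}` and `Z'` is the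
BEC(ε) output of `V'⬝G^{⊗m}`. -/
def becBitCapacity (m : ℕ) (ε : ℝ) (i : Fin (2 ^ m)) : ℝ :=
  mutInfo (becPMF m ε) (fun vθ => vθ.1 i)
    (fun vθ =>
      ((fun j => if vθ.2 j then (none : Option (ZMod 2))
          else some (Matrix.vecMul vθ.1 (GPow m) j)),
        fun j : Fin i.val => vθ.1 (Fin.castLE i.isLt.le j)))

section Entropy

variable {Ω : Type} [Fintype Ω] (p : Ω → ℝ)

theorem prob_comp {α β : Type} [Fintype α] (X : Ω → α) (f : α → β) (y : β) :
    prob p (fun ω => f (X ω)) y = ∑ x, if f x = y then prob p X x else 0 := by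
  unfold prob
  calc ∑ ω, (if f (X ω) = y then p ω else 0)
      = ∑ ω, ∑ x, if X ω = x then (if f x = y then p ω else 0) else 0 := by simp
    _ = ∑ x, if f x = y then ∑ ω, (if X ω = x then p ω else 0) else 0 := by
      rw [Finset.sum_comm]
      refine Finset.sum_congr rfl fun x _ => ?_
      split_ifs <;> simp

theorem entropy_eq_neg_sum_logb_prob {α : Type} [Fintype α] (X : Ω → α) :
    entropy p X = -∑ ω, p ω * Real.logb 2 (prob p X (X ω)) := by
  simp only [entropy, prob, Finset.sum_mul, ite_mul, zero_mul]
  rw [Finset.sum_comm]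
  simp

theorem entropy_comp_of_injOn {α β : Type} [Fintype α] [Fintype β] (X : Ω → α) {f : α → β}
    (hf : Set.InjOn f (Set.range X)) : entropy p (fun ω => f (X ω)) = entropy p X := by
  have hprob : ∀ ω, prob p (fun ω => f (X ω)) (f (X ω)) = prob p X (X ω) := fun ω =>
    Finset.sum_congr rfl fun ω' _ => by
      rw [hf.eq_iff ⟨ω', rfl⟩ ⟨ω, rfl⟩]
  simp only [entropy_eq_neg_sum_logb_prob, hprob]

theorem entropy_comp_of_prob_eq {Γ α : Type} [Fintype Γ] [Fintype α] (J : Ω → Γ) (q : Γ → ℝ)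
    (hJ : ∀ γ, prob p J γ = q γ) (f : Γ → α) : entropy p (fun ω => f (J ω)) = entropy q f := by
  have hprob : prob p (fun ω => f (J ω)) = prob q f := by
    funext x
    simp only [prob_comp, hJ]
    rfl
  simp only [entropy, hprob]

end Entropy

section UniformInput

open Finset

variable {K W T : Type} [AddCommGroup K] [Fintype K] [AddCommGroup W]

def prodUniform (w : T → ℝ) : K × T → ℝ := fun x => w x.2 / Fintype.card K

theorem AddMonoidHom.card_fiber_mul_card_range (f : K →+ W) {y : W} (hy : y ∈ f.range) :
    #{k | f k = y} * Nat.card f.range = Fintype.card K := by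
  obtain ⟨a, rfl⟩ := hy
  have hfiber : #{k | f k = f a} = Nat.card f.ker := by
    rw [← Nat.card_congr (f.fiberEquivKer a), Nat.card_eq_fintype_card, ← Set.toFinset_card]
    congr 1
    ext
    simp
  rw [hfiber, ← AddSubgroup.index_ker, AddSubgroup.card_mul_index, Nat.card_eq_fintype_card]

variable [Fintype T]

theorem prob_prodUniform_hom (w : T → ℝ) (L : T → K →+ W) (t : T) (y : W) :
    prob (prodUniform w) (fun x => (x.2, L x.2 x.1)) (t, y)
      = if y ∈ (L t).range then w t / Nat.card (L t).range else 0 := by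
  have hcount : prob (prodUniform w) (fun x => (x.2, L x.2 x.1)) (t, y)
      = #{k | L t k = y} * (w t / Fintype.card K) := by
    simp only [prob, prodUniform, Fintype.sum_prod_type, Prod.mk.injEq, ite_and]
    simp [Finset.sum_ite_eq', ← Finset.sum_filter]
  rw [hcount]
  split_ifs with hy
  · have h := congrArg (Nat.cast (R := ℝ)) ((L t).card_fiber_mul_card_range hy)
    push_cast at h
    have hpos : (0 : ℝ) < Nat.card (L t).range := by exact_mod_cast Nat.card_pos
    field_simp
    linear_combination w t * h
  · have hempty : #{k | L t k = y} = 0 := by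
      simpa using fun k hk => hy ⟨k, hk⟩
    simp [hempty]

theorem sum_ite_mem_mul_logb [Fintype W] (S : AddSubgroup W) [DecidablePred (· ∈ S)] (c : ℝ) :
    ∑ y, (if y ∈ S then c else 0) * Real.logb 2 (if y ∈ S then c else 0)
      = Nat.card S * (c * Real.logb 2 c) := by
  have hterm : ∀ y, (if y ∈ S then c else 0) * Real.logb 2 (if y ∈ S then c else 0)
      = if y ∈ S then c * Real.logb 2 c else 0 := fun y => by split_ifs <;> simp
  simp only [hterm, ← Finset.sum_filter, Finset.sum_const, nsmul_eq_mul, Nat.card_eq_fintype_card,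
    Fintype.card_subtype]

theorem entropy_prodUniform_hom [Fintype W] (w : T → ℝ) (L : T → K →+ W) :
    entropy (prodUniform w) (fun x => (x.2, L x.2 x.1))
      = -∑ t, w t * Real.logb 2 (w t) + ∑ t, w t * Real.logb 2 (Nat.card (L t).range) := by
  have hterm : ∀ t, ∑ y, prob (prodUniform w) (fun x => (x.2, L x.2 x.1)) (t, y)
      * Real.logb 2 (prob (prodUniform w) (fun x => (x.2, L x.2 x.1)) (t, y))
      = w t * Real.logb 2 (w t) - w t * Real.logb 2 (Nat.card (L t).range) := by
    intro t
    simp only [prob_prodUniform_hom, sum_ite_mem_mul_logb]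
    have hpos : (0 : ℝ) < Nat.card (L t).range := by exact_mod_cast Nat.card_pos
    rcases eq_or_ne (w t) 0 with hw | hw
    · simp [hw]
    · rw [Real.logb_div hw hpos.ne']
      field_simp
  rw [entropy, Fintype.sum_prod_type]
  simp only [hterm, Finset.sum_sub_distrib]
  ring

theorem entropy_prodUniform_comp_fst [Fintype W] (w : T → ℝ) (hw : ∑ t, w t = 1) (L : K →+ W) :
    entropy (prodUniform w) (fun x => L x.1) = Real.logb 2 (Nat.card L.range) := by
  have hprob : ∀ y, prob (prodUniform w) (fun x => L x.1) y
      = if y ∈ L.range then 1 / (Nat.card L.range : ℝ) else 0 := by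
    intro y
    rw [prob_comp (prodUniform w) (fun x => (x.2, L x.1)) Prod.snd, Fintype.sum_prod_type]
    simp only [Finset.sum_ite_eq', Finset.mem_univ, if_true]
    simp only [prob_prodUniform_hom (L := fun _ => L)]
    split_ifs <;> simp [← Finset.sum_div, hw]
  have hpos : (0 : ℝ) < Nat.card L.range := by exact_mod_cast Nat.card_pos
  simp only [entropy, hprob, sum_ite_mem_mul_logb, one_div, Real.logb_inv]
  field_simp

end UniformInput

section LinearObservation

variable {K W T : Type} [AddCommGroup K] [Module (ZMod 2) K] [Fintype K]
  [AddCommGroup W] [Module (ZMod 2) W] [Fintype W] [Fintype T] (w : T → ℝ)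

theorem logb_two_natCard_eq_finrank {V : Type} [AddCommGroup V] [Module (ZMod 2) V] [Finite V] :
    Real.logb 2 (Nat.card V) = Module.finrank (ZMod 2) V := by
  rw [Module.natCard_eq_pow_finrank (K := ZMod 2), Nat.card_zmod]
  push_cast
  rw [Real.logb_pow, Real.logb_self_eq_one one_lt_two, mul_one]

theorem entropy_prodUniform_linearMap (L : T → K →ₗ[ZMod 2] W) :
    entropy (prodUniform w) (fun x => (x.2, L x.2 x.1))
      = -∑ t, w t * Real.logb 2 (w t)
        + ∑ t, w t * Module.finrank (ZMod 2) (LinearMap.range (L t)) := by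
  have h := entropy_prodUniform_hom w (fun t => (L t).toAddMonoidHom)
  simp only [LinearMap.toAddMonoidHom_coe, ← LinearMap.range_toAddSubgroup] at h
  rw [h]
  congr 2
  funext t
  congr 1
  exact logb_two_natCard_eq_finrank (V := LinearMap.range (L t))

theorem entropy_prodUniform_of_surjective (hw : ∑ t, w t = 1) {L : K →ₗ[ZMod 2] W}
    (hL : Function.Surjective L) :
    entropy (prodUniform w) (fun x => L x.1) = Module.finrank (ZMod 2) W := by
  have h := entropy_prodUniform_comp_fst w hw L.toAddMonoidHom
  rw [← LinearMap.range_toAddSubgroup, LinearMap.range_eq_top.2 hL] at h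
  rw [← logb_two_natCard_eq_finrank, ← Nat.card_univ]
  exact h

end LinearObservation

theorem Finset.sum_filter_le_sub_filter_lt {ι : Type} [LinearOrder ι] (g : Finset ι → ℝ)
    (D : Finset ι) :
    ∑ i ∈ D, (g {j ∈ D | i ≤ j} - g {j ∈ D | i < j}) = g D - g ∅ := by
  induction D using Finset.induction_on_min with
  | empty => simp
  | insert a s ha ih =>
    have has : a ∉ s := fun h => lt_irrefl a (ha a h)
    have hle : {j ∈ insert a s | a ≤ j} = insert a s :=
      Finset.filter_true_of_mem fun j hj => by
        rcases Finset.mem_insert.1 hj with rfl | hj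
        exacts [le_rfl, (ha j hj).le]
    have hlt : {j ∈ insert a s | a < j} = s := by
      rw [Finset.filter_insert, if_neg (lt_irrefl a), Finset.filter_true_of_mem ha]
    have hrest : ∀ i ∈ s, ∀ P : ι → Prop, (∀ j, P j → i ≤ j) → [DecidablePred P] →
        {j ∈ insert a s | P j} = {j ∈ s | P j} := fun i hi P hP _ => by
      rw [Finset.filter_insert, if_neg fun h => (ha i hi).not_ge (hP a h)]
    rw [Finset.sum_insert has, hle, hlt]
    rw [Finset.sum_congr rfl fun i hi => by
      rw [hrest i hi (i ≤ ·) fun _ h => h, hrest i hi (i < ·) fun _ h => h.le], ih]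
    ring

section SpanRank

variable {F V : Type} [DivisionRing F] [AddCommGroup V] [Module F V]

theorem Set.finrank_union_add_finrank_inter_le [FiniteDimensional F V] (s t : Set V) :
    (s ∪ t).finrank F + (s ∩ t).finrank F ≤ s.finrank F + t.finrank F := by
  have hmod := Submodule.finrank_sup_add_finrank_inf_eq (Submodule.span F s) (Submodule.span F t)
  have hinter : (s ∩ t).finrank F ≤ Module.finrank F ↥(Submodule.span F s ⊓ Submodule.span F t) :=
    Submodule.finrank_mono (le_inf (Submodule.span_mono Set.inter_subset_left)
      (Submodule.span_mono Set.inter_subset_right))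
  rw [← Submodule.span_union] at hmod
  unfold Set.finrank at *
  omega

theorem Set.finrank_image_finset_le_card {ι : Type} (f : ι → V) (D : Finset ι) :
    (f '' ↑D).finrank F ≤ D.card := by
  rw [← Finset.coe_image]
  exact (finrank_span_finset_le_card _).trans Finset.card_image_le

theorem sum_finrank_image_Ici_sub_Ioi_le [FiniteDimensional F V] {ι : Type} [LinearOrder ι]
    (f : ι → V) (D : Finset ι) :
    ∑ i ∈ D, (((f '' Set.Ici i).finrank F : ℝ) - (f '' Set.Ioi i).finrank F)
      ≤ (f '' ↑D).finrank F := by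
  have htel := Finset.sum_filter_le_sub_filter_lt (fun E : Finset ι => ((f '' ↑E).finrank F : ℝ)) D
  simp only [Finset.coe_empty, Set.image_empty, Set.finrank_empty, Nat.cast_zero, sub_zero] at htel
  rw [← htel]
  refine Finset.sum_le_sum fun i hi => ?_
  have hunion : f '' ↑{j ∈ D | i ≤ j} ∪ f '' Set.Ioi i = f '' Set.Ici i := by
    rw [← Set.image_union]
    congr 1
    ext j
    simp only [Finset.coe_filter, Set.mem_union, Set.mem_Ioi, Set.mem_Ici]
    constructor
    · rintro (⟨-, h⟩ | h)
      exacts [h, h.le]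
    · intro h
      rcases h.eq_or_lt with rfl | h
      exacts [Or.inl ⟨hi, le_rfl⟩, Or.inr h]
  have hinter : f '' ↑{j ∈ D | i < j} ⊆ f '' ↑{j ∈ D | i ≤ j} ∩ f '' Set.Ioi i :=
    Set.subset_inter (Set.image_mono fun j hj => by simp_all [le_of_lt])
      (Set.image_mono fun j hj => by simp_all)
  have hsub := Set.finrank_union_add_finrank_inter_le (F := F) (f '' ↑{j ∈ D | i ≤ j})
    (f '' Set.Ioi i)
  rw [hunion] at hsub
  have hmono := Set.finrank_mono (K := F) hinter
  rw [sub_le_sub_iff]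
  exact_mod_cast (by omega : (f '' Set.Ici i).finrank F + (f '' ↑{j ∈ D | i < j}).finrank F
      ≤ (f '' ↑{j ∈ D | i ≤ j}).finrank F + (f '' Set.Ioi i).finrank F)

end SpanRank

section Coordinates

variable {F : Type} [Field F]

theorem mem_span_basisFun_image_iff {ι : Type} [Finite ι] {s : Set ι} {v : ι → F} :
    v ∈ Submodule.span F (Pi.basisFun F ι '' s) ↔ ∀ j ∉ s, v j = 0 := by
  rw [Module.Basis.mem_span_image]
  simp only [Set.subset_def, Finset.mem_coe, Finsupp.mem_support_iff, Pi.basisFun_repr]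
  exact forall_congr' fun j => not_imp_comm

theorem ker_funLeft_eq_span {ι κ : Type} [Finite ι] (e : κ → ι) :
    LinearMap.ker (LinearMap.funLeft F F e)
      = Submodule.span F (Pi.basisFun F ι '' (Set.range e)ᶜ) := by
  ext v
  rw [mem_span_basisFun_image_iff, LinearMap.mem_ker]
  simp only [Set.mem_compl_iff, not_not, Set.mem_range]
  constructor
  · rintro h j ⟨k, rfl⟩
    exact congrFun h k
  · intro h
    funext k
    exact h _ ⟨k, rfl⟩

theorem map_vecMulLinear_span_basisFun {ι ι' : Type} [Fintype ι] (M : Matrix ι ι' F) (s : Set ι) :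
    (Submodule.span F (Pi.basisFun F ι '' s)).map M.vecMulLinear
      = Submodule.span F (M.row '' s) := by
  rw [Submodule.map_span, Set.image_image]
  congr 1
  refine Set.image_congr fun a _ => ?_
  simp [Pi.basisFun_apply]

theorem LinearMap.finrank_range_prod_of_surjective {K W W' : Type} [AddCommGroup K] [Module F K]
    [FiniteDimensional F K] [AddCommGroup W] [Module F W] [AddCommGroup W'] [Module F W']
    (M : K →ₗ[F] W) {P : K →ₗ[F] W'} (hP : Function.Surjective P) :
    Module.finrank F (LinearMap.range (M.prod P))
      = Module.finrank F W' + Module.finrank F ((LinearMap.ker P).map M) := by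
  have hprod := (M.prod P).finrank_range_add_finrank_ker
  have hP' := P.finrank_range_add_finrank_ker
  have hres := (M.domRestrict (LinearMap.ker P)).finrank_range_add_finrank_ker
  rw [LinearMap.range_eq_top.2 hP, finrank_top] at hP'
  rw [LinearMap.range_domRestrict, LinearMap.ker_domRestrict,
    ← Submodule.finrank_map_subtype_eq, Submodule.map_comap_subtype] at hres
  rw [LinearMap.ker_prod, inf_comm] at hprod
  omega

end Coordinates

section ErasureChannel

open Matrix

variable {ι : Type}

def erasureWeight [Fintype ι] (ε : ℝ) (θ : ι → Bool) : ℝ := ∏ j, if θ j then ε else 1 - ε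

theorem sum_erasureWeight [Fintype ι] [DecidableEq ι] (ε : ℝ) :
    ∑ θ : ι → Bool, erasureWeight ε θ = 1 := by
  simp [erasureWeight, ← Fintype.prod_sum (fun (_ : ι) (b : Bool) => if b then ε else 1 - ε)]

theorem erasureWeight_nonneg [Fintype ι] {ε : ℝ} (hε : ε ∈ Set.Icc (0 : ℝ) 1) (θ : ι → Bool) :
    0 ≤ erasureWeight ε θ :=
  Finset.prod_nonneg fun j _ => by split_ifs <;> linarith [hε.1, hε.2]

def becOutput {α : Type} (θ : ι → Bool) (x : ι → α) : ι → Option α :=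
  fun j => if θ j then none else some (x j)

def eraseCols {κ α : Type} [Zero α] (θ : ι → Bool) (G : Matrix κ ι α) : Matrix κ ι α :=
  Matrix.of fun a j => if θ j then 0 else G a j

variable {κ : Type} [Fintype κ] {F : Type} [Field F]

theorem becOutput_vecMul_eraseCols (θ : ι → Bool) (G : Matrix κ ι F) (v : κ → F) :
    becOutput θ (v ᵥ* eraseCols θ G) = becOutput θ (v ᵥ* G) := by
  funext j
  by_cases h : θ j <;> simp [becOutput, eraseCols, h, Matrix.vecMul, dotProduct]

theorem becOutput_vecMul_eraseCols_inj {θ θ' : ι → Bool} (G : Matrix κ ι F) {v v' : κ → F}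
    (h : becOutput θ (v ᵥ* eraseCols θ G) = becOutput θ' (v' ᵥ* eraseCols θ' G)) :
    θ = θ' ∧ v ᵥ* eraseCols θ G = v' ᵥ* eraseCols θ' G := by
  have hj := fun j => congrFun h j
  have hθ : θ = θ' := funext fun j => by
    have := hj j
    unfold becOutput at this
    split_ifs at this <;> simp_all
  subst hθ
  refine ⟨rfl, funext fun j => ?_⟩
  have := hj j
  by_cases hθj : θ j
  · simp [Matrix.vecMul, dotProduct, eraseCols, hθj]
  · simpa [becOutput, hθj] using this

end ErasureChannel

section ErasureEntropy

open Matrix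

variable {ι κ K : Type} [Fintype ι] [DecidableEq ι] [Fintype κ]
  [AddCommGroup K] [Module (ZMod 2) K] [Fintype K]
  (w : (ι → Bool) → ℝ) (G : Matrix κ ι (ZMod 2)) (E : K →ₗ[ZMod 2] (κ → ZMod 2))

theorem entropy_becOutput :
    entropy (prodUniform w) (fun x => becOutput x.2 (E x.1 ᵥ* G))
      = -∑ θ, w θ * Real.logb 2 (w θ)
        + ∑ θ, w θ * Module.finrank (ZMod 2)
            (LinearMap.range ((eraseCols θ G).vecMulLinear ∘ₗ E)) := by
  have hinj : Set.InjOn (fun y : (ι → Bool) × (ι → ZMod 2) => becOutput y.1 y.2)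
      (Set.range fun x : K × (ι → Bool) => (x.2, ((eraseCols x.2 G).vecMulLinear ∘ₗ E) x.1)) := by
    rintro _ ⟨x, rfl⟩ _ ⟨x', rfl⟩ h
    obtain ⟨hθ, hy⟩ := becOutput_vecMul_eraseCols_inj G h
    exact Prod.ext hθ hy
  rw [← entropy_prodUniform_linearMap, ← entropy_comp_of_injOn _ _ hinj]
  simp [becOutput_vecMul_eraseCols]

theorem entropy_becOutput_prod {W : Type} [AddCommGroup W] [Module (ZMod 2) W] [Fintype W]
    (P : K →ₗ[ZMod 2] W) :
    entropy (prodUniform w) (fun x => (becOutput x.2 (E x.1 ᵥ* G), P x.1))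
      = -∑ θ, w θ * Real.logb 2 (w θ)
        + ∑ θ, w θ * Module.finrank (ZMod 2)
            (LinearMap.range (((eraseCols θ G).vecMulLinear ∘ₗ E).prod P)) := by
  have hinj : Set.InjOn
      (fun y : (ι → Bool) × ((ι → ZMod 2) × W) => (becOutput y.1 y.2.1, y.2.2))
      (Set.range fun x : K × (ι → Bool) =>
        (x.2, (((eraseCols x.2 G).vecMulLinear ∘ₗ E).prod P) x.1)) := by
    rintro _ ⟨x, rfl⟩ _ ⟨x', rfl⟩ h
    obtain ⟨hθ, hy⟩ := becOutput_vecMul_eraseCols_inj G (congrArg Prod.fst h)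
    have hP : P x.1 = P x'.1 := congrArg Prod.snd h
    exact Prod.ext hθ (Prod.ext hy hP)
  rw [← entropy_prodUniform_linearMap, ← entropy_comp_of_injOn _ _ hinj]
  simp [becOutput_vecMul_eraseCols]

end ErasureEntropy

section BitChannel

open Matrix

variable {N : ℕ}

theorem finrank_range_vecMulLinear_prod_funLeft_castLE {s : ℕ} (h : s ≤ N)
    (M : Matrix (Fin N) (Fin N) (ZMod 2)) :
    Module.finrank (ZMod 2)
        (LinearMap.range (M.vecMulLinear.prod (LinearMap.funLeft (ZMod 2) (ZMod 2) (Fin.castLE h))))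
      = s + (M.row '' {j | s ≤ j.val}).finrank (ZMod 2) := by
  have hcompl : (Set.range (Fin.castLE h))ᶜ = {j : Fin N | s ≤ j.val} := by
    ext j
    simp
  rw [LinearMap.finrank_range_prod_of_surjective _
      (LinearMap.funLeft_surjective_of_injective _ _ _ (Fin.castLE_injective h)),
    Module.finrank_fin_fun, ker_funLeft_eq_span, map_vecMulLinear_span_basisFun, hcompl]
  rfl

theorem entropy_becOutput_prefix (w : (Fin N → Bool) → ℝ) (G : Matrix (Fin N) (Fin N) (ZMod 2))
    {s : ℕ} (hs : s ≤ N) :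
    entropy (prodUniform w) (fun x : (Fin N → ZMod 2) × (Fin N → Bool) =>
        (becOutput x.2 (x.1 ᵥ* G), fun j : Fin s => x.1 (Fin.castLE hs j)))
      = -∑ θ, w θ * Real.logb 2 (w θ)
        + ∑ θ, w θ * (s + ((eraseCols θ G).row '' {j | s ≤ j.val}).finrank (ZMod 2) : ℕ) := by
  have h := entropy_becOutput_prod w G LinearMap.id
    (LinearMap.funLeft (ZMod 2) (ZMod 2) (Fin.castLE hs))
  simp only [LinearMap.comp_id, finrank_range_vecMulLinear_prod_funLeft_castLE] at h
  exact h

theorem mutInfo_bitChannel_eq_sum_finrank (w : (Fin N → Bool) → ℝ) (hw : ∑ θ, w θ = 1)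
    (G : Matrix (Fin N) (Fin N) (ZMod 2)) (i : Fin N) :
    mutInfo (prodUniform w) (fun x : (Fin N → ZMod 2) × (Fin N → Bool) => x.1 i)
        (fun x => (becOutput x.2 (x.1 ᵥ* G), fun j : Fin i => x.1 (Fin.castLE i.isLt.le j)))
      = ∑ θ, w θ * (((eraseCols θ G).row '' Set.Ici i).finrank (ZMod 2)
          - ((eraseCols θ G).row '' Set.Ioi i).finrank (ZMod 2) : ℝ) := by
  have hbit : entropy (prodUniform w) (fun x : (Fin N → ZMod 2) × (Fin N → Bool) => x.1 i) = 1 := by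
    have h := entropy_prodUniform_of_surjective
      (L := (LinearMap.proj i : (Fin N → ZMod 2) →ₗ[ZMod 2] ZMod 2)) w hw
      fun b => ⟨Pi.single i b, by simp⟩
    rw [Module.finrank_self, Nat.cast_one] at h
    exact h
  have hsplit : entropy (prodUniform w) (fun x : (Fin N → ZMod 2) × (Fin N → Bool) => (x.1 i,
        (becOutput x.2 (x.1 ᵥ* G), fun j : Fin i => x.1 (Fin.castLE i.isLt.le j))))
      = entropy (prodUniform w) (fun x : (Fin N → ZMod 2) × (Fin N → Bool) =>
          (becOutput x.2 (x.1 ᵥ* G), fun j : Fin (i + 1) => x.1 (Fin.castLE i.isLt j))) := by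
    have hinj : Set.InjOn (fun y : (Fin N → Option (ZMod 2)) × (Fin (i + 1) → ZMod 2) =>
        (y.2 (Fin.last i), (y.1, Fin.init y.2))) Set.univ := fun y _ y' _ h => by
      simp only [Prod.mk.injEq] at h
      refine Prod.ext h.2.1 ?_
      rw [← Fin.snoc_init_self y.2, ← Fin.snoc_init_self y'.2, h.1, h.2.2]
    rw [← entropy_comp_of_injOn _ _ (hinj.mono (Set.subset_univ _))]
    rfl
  have hIci : {j : Fin N | i.val ≤ j.val} = Set.Ici i := rfl
  have hIoi : {j : Fin N | i.val + 1 ≤ j.val} = Set.Ioi i := rfl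
  rw [mutInfo, hbit, hsplit, entropy_becOutput_prefix, entropy_becOutput_prefix, hIci, hIoi]
  push_cast
  simp only [mul_add, mul_sub, Finset.sum_add_distrib, Finset.sum_sub_distrib, ← Finset.sum_mul, hw]
  ring

end BitChannel

theorem becPMF_eq_prodUniform (m : ℕ) (ε : ℝ) : becPMF m ε = prodUniform (erasureWeight ε) := by
  funext x
  simp [becPMF, prodUniform, erasureWeight, div_eq_inv_mul]

theorem becBitCapacity_eq (m : ℕ) (ε : ℝ) (i : Fin (2 ^ m)) :
    becBitCapacity m ε i
      = ∑ θ, erasureWeight ε θ * (((eraseCols θ (GPow m)).row '' Set.Ici i).finrank (ZMod 2)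
          - ((eraseCols θ (GPow m)).row '' Set.Ioi i).finrank (ZMod 2) : ℝ) := by
  rw [becBitCapacity, becPMF_eq_prodUniform]
  exact mutInfo_bitChannel_eq_sum_finrank _ (sum_erasureWeight ε) (GPow m) i

section Encoder

variable {ι F : Type} [Field F] [DecidableEq ι] (A R : Finset ι)

def encode : (({i // i ∈ A} → F) × ({i // i ∈ R} → F)) →ₗ[F] (ι → F) where
  toFun ue i := if h : i ∈ A then ue.1 ⟨i, h⟩ else if h : i ∈ R then ue.2 ⟨i, h⟩ else 0
  map_add' _ _ := by
    funext i
    simp only [Prod.fst_add, Prod.snd_add, Pi.add_apply]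
    split_ifs <;> simp
  map_smul' _ _ := by
    funext i
    simp only [Prod.smul_fst, Prod.smul_snd, Pi.smul_apply, RingHom.id_apply]
    split_ifs <;> simp

variable [Finite ι] {A R}

theorem range_encode :
    LinearMap.range (encode (F := F) A R) = Submodule.span F (Pi.basisFun F ι '' ↑(A ∪ R)) := by
  ext v
  rw [mem_span_basisFun_image_iff]
  constructor
  · rintro ⟨ue, rfl⟩ j hj
    simp_all [encode]
  · intro hv
    refine ⟨(fun a => v a, fun a => v a), funext fun j => ?_⟩
    by_cases hA : j ∈ A
    · simp [encode, hA]
    by_cases hR : j ∈ R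
    · simp [encode, hA, hR]
    · simp [encode, hA, hR, hv j (by simp [hA, hR])]

theorem map_encode_ker_fst (hAR : Disjoint A R) :
    (LinearMap.ker (LinearMap.fst F ({i // i ∈ A} → F) ({i // i ∈ R} → F))).map (encode A R)
      = Submodule.span F (Pi.basisFun F ι '' ↑R) := by
  ext v
  rw [LinearMap.ker_fst, ← LinearMap.range_comp, mem_span_basisFun_image_iff]
  constructor
  · rintro ⟨e, rfl⟩ j hj
    rw [Finset.mem_coe] at hj
    simp [encode, hj]
  · intro hv
    refine ⟨fun a => v a, funext fun j => ?_⟩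
    by_cases hA : j ∈ A
    · simp [encode, hA, hv j (Finset.disjoint_left.1 hAR hA)]
    by_cases hR : j ∈ R
    · simp [encode, hA, hR]
    · simp [encode, hA, hR, hv j hR]

end Encoder

section Leakage

open Matrix

variable {Ω ι : Type} [Fintype Ω] [Fintype ι] [DecidableEq ι] (p : Ω → ℝ)
  {w : (ι → Bool) → ℝ} (G : Matrix ι ι (ZMod 2)) {A R : Finset ι}
  (U : Ω → ({i // i ∈ A} → ZMod 2)) (E : Ω → ({i // i ∈ R} → ZMod 2)) (Θ : Ω → ι → Bool)

theorem finrank_range_vecMulLinear_comp_encode (M : Matrix ι ι (ZMod 2)) :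
    Module.finrank (ZMod 2) (LinearMap.range (M.vecMulLinear ∘ₗ encode A R))
      = (M.row '' ↑(A ∪ R)).finrank (ZMod 2) := by
  rw [LinearMap.range_comp, range_encode, map_vecMulLinear_span_basisFun]
  rfl

theorem finrank_range_vecMulLinear_comp_encode_prod_fst (hAR : Disjoint A R)
    (M : Matrix ι ι (ZMod 2)) :
    Module.finrank (ZMod 2) (LinearMap.range ((M.vecMulLinear ∘ₗ encode A R).prod
        (LinearMap.fst (ZMod 2) ({i // i ∈ A} → ZMod 2) ({i // i ∈ R} → ZMod 2))))
      = A.card + (M.row '' ↑R).finrank (ZMod 2) := by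
  rw [LinearMap.finrank_range_prod_of_surjective _ LinearMap.fst_surjective,
    Module.finrank_fintype_fun_eq_card, Fintype.card_coe, Submodule.map_comp,
    map_encode_ker_fst hAR, map_vecMulLinear_span_basisFun]
  rfl

theorem prob_eq_prodUniform_erasureWeight {ε : ℝ}
    (hUE : ∀ u e, prob p (fun ω => (U ω, E ω)) (u, e) = (1 / 2 : ℝ) ^ (A.card + R.card))
    (hΘ : ∀ u e θ, prob p (fun ω => ((U ω, E ω), Θ ω)) ((u, e), θ)
      = prob p (fun ω => (U ω, E ω)) (u, e) * erasureWeight ε θ) :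
    ∀ γ, prob p (fun ω => ((U ω, E ω), Θ ω)) γ = prodUniform (erasureWeight ε) γ := by
  rintro ⟨⟨u, e⟩, θ⟩
  rw [hΘ, hUE, prodUniform, mul_comm, Fintype.card_prod, Fintype.card_fun, Fintype.card_fun,
    ZMod.card, Fintype.card_coe, Fintype.card_coe, one_div, inv_pow, pow_add]
  push_cast
  rfl

theorem mutInfo_message_output_eq_sum_finrank (hw : ∑ θ, w θ = 1) (hAR : Disjoint A R)
    (hJ : ∀ γ, prob p (fun ω => ((U ω, E ω), Θ ω)) γ = prodUniform w γ) :
    mutInfo p U (fun ω => becOutput (Θ ω) (encode A R (U ω, E ω) ᵥ* G))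
      = ∑ θ, w θ * (((eraseCols θ G).row '' ↑(A ∪ R)).finrank (ZMod 2)
          - ((eraseCols θ G).row '' ↑R).finrank (ZMod 2) : ℝ) := by
  have hU : entropy p U = A.card := by
    have h := entropy_comp_of_prob_eq p _ _ hJ
      (fun x => LinearMap.fst (ZMod 2) ({i // i ∈ A} → ZMod 2) ({i // i ∈ R} → ZMod 2) x.1)
    rw [entropy_prodUniform_of_surjective w hw LinearMap.fst_surjective,
      Module.finrank_fintype_fun_eq_card, Fintype.card_coe] at h
    exact h
  have hZ : entropy p (fun ω => becOutput (Θ ω) (encode A R (U ω, E ω) ᵥ* G))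
      = -∑ θ, w θ * Real.logb 2 (w θ)
        + ∑ θ, w θ * ((eraseCols θ G).row '' ↑(A ∪ R)).finrank (ZMod 2) := by
    have h := entropy_comp_of_prob_eq p _ _ hJ (fun x => becOutput x.2 (encode A R x.1 ᵥ* G))
    simp only [entropy_becOutput, finrank_range_vecMulLinear_comp_encode] at h
    exact h
  have hUZ : entropy p (fun ω => (U ω, becOutput (Θ ω) (encode A R (U ω, E ω) ᵥ* G)))
      = -∑ θ, w θ * Real.logb 2 (w θ)
        + ∑ θ, w θ * (A.card + ((eraseCols θ G).row '' ↑R).finrank (ZMod 2) : ℕ) := by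
    have h := entropy_comp_of_prob_eq p _ _ hJ
      (fun x => (x.1.1, becOutput x.2 (encode A R x.1 ᵥ* G)))
    have hswap := entropy_comp_of_injOn (prodUniform w)
      (fun x : (({i // i ∈ A} → ZMod 2) × ({i // i ∈ R} → ZMod 2)) × (ι → Bool) =>
        (becOutput x.2 (encode A R x.1 ᵥ* G), x.1.1)) (f := Prod.swap) Prod.swap_injective.injOn
    have hP := entropy_becOutput_prod w G (encode A R)
      (LinearMap.fst (ZMod 2) ({i // i ∈ A} → ZMod 2) ({i // i ∈ R} → ZMod 2))
    simp only [finrank_range_vecMulLinear_comp_encode_prod_fst hAR] at hP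
    rw [h]
    exact hswap.trans hP
  rw [mutInfo, hU, hZ, hUZ]
  push_cast
  simp only [mul_add, mul_sub, Finset.sum_add_distrib, Finset.sum_sub_distrib, ← Finset.sum_mul, hw]
  ring

end Leakage

theorem stmt8_general {Ω : Type} [Fintype Ω] (p : Ω → ℝ)
    (m : ℕ) (ε : ℝ) (hε : ε ∈ Set.Icc (0 : ℝ) 1)
    (A R : Finset (Fin (2 ^ m)))
    (hAR : Disjoint A R)
    (U : Ω → ({i // i ∈ A} → ZMod 2)) (E : Ω → ({i // i ∈ R} → ZMod 2))
    (Θ : Ω → (Fin (2 ^ m) → Bool))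
    (hUE : ∀ u e, prob p (fun ω => (U ω, E ω)) (u, e) = (1 / 2 : ℝ) ^ (A.card + R.card))
    (hΘ : ∀ u e θ, prob p (fun ω => ((U ω, E ω), Θ ω)) ((u, e), θ)
      = prob p (fun ω => (U ω, E ω)) (u, e) * ∏ j, (if θ j then ε else 1 - ε))
    (V : Ω → (Fin (2 ^ m) → ZMod 2))
    (hV : ∀ ω i, V ω i
      = if h : i ∈ A then U ω ⟨i, h⟩ else if h : i ∈ R then E ω ⟨i, h⟩ else 0)
    (Z : Ω → (Fin (2 ^ m) → Option (ZMod 2)))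
    (hZ : ∀ ω j, Z ω j = if Θ ω j then none
      else some (Matrix.vecMul (V ω) (GPow m) j)) :
    mutInfo p U Z
      ≥ max (∑ i ∈ A, becBitCapacity m ε i + ∑ j ∈ R, becBitCapacity m ε j
          - (R.card : ℝ)) 0 := by
  have hw := sum_erasureWeight (ι := Fin (2 ^ m)) ε
  have hZ' : Z = fun ω => becOutput (Θ ω) (Matrix.vecMul (encode A R (U ω, E ω)) (GPow m)) := by
    funext ω j
    rw [hZ, show V ω = encode A R (U ω, E ω) from funext fun i => by rw [hV]; rfl]
    rfl
  rw [hZ', mutInfo_message_output_eq_sum_finrank p (GPow m) U E Θ hw hAR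
    (prob_eq_prodUniform_erasureWeight p U E Θ hUE hΘ), ← Finset.sum_union hAR]
  simp only [becBitCapacity_eq]
  rw [Finset.sum_comm, ge_iff_le, max_le_iff]
  constructor
  · have hR : (R.card : ℝ) = ∑ θ : Fin (2 ^ m) → Bool, erasureWeight ε θ * R.card := by
      rw [← Finset.sum_mul, hw, one_mul]
    rw [hR, ← Finset.sum_sub_distrib]
    refine Finset.sum_le_sum fun θ _ => ?_
    rw [← Finset.mul_sum, ← mul_sub]
    refine mul_le_mul_of_nonneg_left ?_ (erasureWeight_nonneg hε θ)
    have hsum := sum_finrank_image_Ici_sub_Ioi_le (F := ZMod 2) (eraseCols θ (GPow m)).row (A ∪ R)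
    have hcard : (((eraseCols θ (GPow m)).row '' ↑R).finrank (ZMod 2) : ℝ) ≤ R.card :=
      Nat.cast_le.2 (Set.finrank_image_finset_le_card _ _)
    linarith
  · refine Finset.sum_nonneg fun θ _ => mul_nonneg (erasureWeight_nonneg hε θ) (sub_nonneg.2 ?_)
    exact Nat.cast_le.2 (Set.finrank_mono
      (Set.image_mono (Finset.coe_subset.2 Finset.subset_union_right)))

/-- **Proposition 3** instantiated for a wiretap BEC: in the polar-secrecy-code-over-BEC
setup, the MIS leakage satisfies `I(U ; Z) ≥ max (∑_{i∈A} C_i + ∑_{j∈R} C_j − r) 0`. -/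
theorem stmt8 {Ω : Type} [Fintype Ω] (p : Ω → ℝ) (hp : IsPMF p)
    (m : ℕ) (ε : ℝ) (hε : ε ∈ Set.Icc (0 : ℝ) 1)
    (A R B : Finset (Fin (2 ^ m)))
    (hAR : Disjoint A R) (hAB : Disjoint A B) (hRB : Disjoint R B)
    (hcover : A ∪ R ∪ B = Finset.univ)
    (U : Ω → ({i // i ∈ A} → ZMod 2)) (E : Ω → ({i // i ∈ R} → ZMod 2))
    (Θ : Ω → (Fin (2 ^ m) → Bool))
    (hUE : ∀ u e, prob p (fun ω => (U ω, E ω)) (u, e) = (1 / 2 : ℝ) ^ (A.card + R.card))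
    (hΘ : ∀ u e θ, prob p (fun ω => ((U ω, E ω), Θ ω)) ((u, e), θ)
      = prob p (fun ω => (U ω, E ω)) (u, e) * ∏ j, (if θ j then ε else 1 - ε))
    (V : Ω → (Fin (2 ^ m) → ZMod 2))
    (hV : ∀ ω i, V ω i
      = if h : i ∈ A then U ω ⟨i, h⟩ else if h : i ∈ R then E ω ⟨i, h⟩ else 0)
    (Z : Ω → (Fin (2 ^ m) → Option (ZMod 2)))
    (hZ : ∀ ω j, Z ω j = if Θ ω j then none
      else some (Matrix.vecMul (V ω) (GPow m) j)) :
    mutInfo p U Z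
      ≥ max (∑ i ∈ A, becBitCapacity m ε i + ∑ j ∈ R, becBitCapacity m ε j
          - (R.card : ℝ)) 0 :=
  stmt8_general p m ε hε A R hAR U E Θ hUE hΘ V hV Z hZ
end
end
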